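/- arXiv:2211.03883 — 8 statements merged into one kernel-verified Lean document; each statement's English description precedes it below -/
import Mathlib

section
/- Let J be a finite set and let v̄ : 2^J → ℝ be a monotone submodular set function taking strictly positive values, such that v̄({k}) ≤ 2·v̄(∅) for every k ∈ J. Then for every R ⊆ J and every j ∈ R, one has v̄(R ∖ {j}) ≥ Σ_{k ∈ R} ( v̄(R) − v̄(R ∖ {k}) ). -/
lemma marginals_sum_aux {J : Type*} [DecidableEq J]
    (v : Finset J → ℝ)
    (hsubmod : ∀ S T : Finset J, v (S ∩ T) + v (S ∪ T) ≤ v S + v T)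
    (R : Finset J) :
    ∑ k ∈ R, (v R - v (R.erase k)) ≤ v R - v ∅ := by
  induction R using Finset.induction with
  | empty => simp
  | @insert a s ha ih =>
    rw [Finset.sum_insert ha]
    have h1 : ∀ k ∈ s, v (insert a s) - v ((insert a s).erase k)
        ≤ v s - v (s.erase k) := by
      intro k hk
      have hka : k ≠ a := fun h => ha (h ▸ hk)
      have := hsubmod ((insert a s).erase k) s
      have hU : (insert a s).erase k ∪ s = insert a s := by
        apply Finset.Subset.antisymm
        · exact Finset.union_subset (Finset.erase_subset _ _)
            (Finset.subset_insert _ _)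
        · intro x hx
          rcases Finset.mem_insert.mp hx with h | h
          · exact Finset.mem_union_left _ (Finset.mem_erase.mpr ⟨h ▸ hka.symm, h ▸ Finset.mem_insert_self a s⟩)
          · exact Finset.mem_union_right _ h
      have hI : (insert a s).erase k ∩ s = s.erase k := by
        ext x
        simp only [Finset.mem_inter, Finset.mem_erase, Finset.mem_insert]
        constructor
        · rintro ⟨⟨hxk, _⟩, hxs⟩; exact ⟨hxk, hxs⟩
        · rintro ⟨hxk, hxs⟩; exact ⟨⟨hxk, Or.inr hxs⟩, hxs⟩
      rw [hU, hI] at this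
      linarith
    have h2 : ∑ k ∈ s, (v (insert a s) - v ((insert a s).erase k))
        ≤ ∑ k ∈ s, (v s - v (s.erase k)) := Finset.sum_le_sum h1
    have h3 : (insert a s).erase a = s := Finset.erase_insert ha
    rw [h3]
    linarith
/-- For a monotone submodular set function `v̄` on a finite set `J`
taking strictly positive values with `v̄({k}) ≤ 2·v̄(∅)` for every `k ∈ J`, for every
`R ⊆ J` and every `j ∈ R`, `v̄(R ∖ {j}) ≥ Σ_{k ∈ R} (v̄(R) − v̄(R ∖ {k}))`. -/
theorem marginals_bound {J : Type*} [Fintype J] [DecidableEq J]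
    (v : Finset J → ℝ)
    (hmono : ∀ S T : Finset J, S ⊆ T → v S ≤ v T)
    (hsubmod : ∀ S T : Finset J, v (S ∩ T) + v (S ∪ T) ≤ v S + v T)
    (hpos : ∀ S : Finset J, 0 < v S)
    (hsingle : ∀ k : J, v {k} ≤ 2 * v ∅)
    (R : Finset J) (j : J) (hj : j ∈ R) :
    ∑ k ∈ R, (v R - v (R.erase k)) ≤ v (R.erase j) := by
  have h1 := marginals_sum_aux v hsubmod R
  have h2 := hsubmod (R.erase j) {j}
  have hI : R.erase j ∩ {j} = ∅ := by
    ext x; simp only [Finset.mem_inter, Finset.mem_erase, Finset.mem_singleton,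
      Finset.notMem_empty, iff_false]
    rintro ⟨⟨hxj, _⟩, rfl⟩; exact hxj rfl
  have hU : R.erase j ∪ {j} = R := by
    ext x; simp only [Finset.mem_union, Finset.mem_erase, Finset.mem_singleton]
    constructor
    · rintro (⟨_, h⟩ | rfl); exact h; exact hj
    · intro h; by_cases hx : x = j
      · exact Or.inr hx
      · exact Or.inl ⟨hx, h⟩
  rw [hI, hU] at h2
  have := hsingle j
  linarith
end

section
/- Let R = (R_i)_{i∈Ā} be an ε̄-local optimum with respect to the endowed valuations v̄_i, with prices p_j as defined. Then: (a) for every item j ∈ J with j ∈ R_i and every agent k ∈ Ā, v̄_k(R_k ∪ {j}) / v̄_k(R_k) ≤ (1+ε̄)^{1/w_k} · e^{p_j / w_k}; and (b) for every agent k ∈ Ā and every set T ⊆ J, v̄_k(R_k ∪ T) / v̄_k(R_k) ≤ (1+ε̄)^{|T|/w_k} · e^{p(T)/w_k}. -/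
open Finset

/-- (Lemma on local optima, asymmetric case.)
In the asymmetric local-search setup, for an `ε̄`-local optimum `R` with prices `p`:
(a) for every item `j ∈ R_i` and every agent `k`,
`v̄_k(R_k ∪ {j}) / v̄_k(R_k) ≤ (1+ε̄)^{1/w_k} · e^{p_j / w_k}`; and
(b) for every agent `k` and every `T ⊆ J`,
`v̄_k(R_k ∪ T) / v̄_k(R_k) ≤ (1+ε̄)^{|T|/w_k} · e^{p(T)/w_k}`. -/
theorem local_optimum_price_bounds {J A : Type*} [Fintype J] [DecidableEq J]
    [Fintype A] [Nonempty A]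
    (w : A → ℝ) (hw : ∀ i, 0 < w i) (hwsum : ∑ i, w i ≤ 1)
    (v : A → Finset J → ℝ)
    (hmono : ∀ i, ∀ S T : Finset J, S ⊆ T → v i S ≤ v i T)
    (hsubmod : ∀ i, ∀ S T : Finset J, v i (S ∩ T) + v i (S ∪ T) ≤ v i S + v i T)
    (hv0 : ∀ i, v i ∅ = 0) (hvJ : ∀ i, 0 < v i (univ : Finset J))
    (ℓ : A → J) (hℓ : ∀ i, ∀ j : J, v i {j} ≤ v i {ℓ i})
    (vb : A → Finset J → ℝ) (hvb : ∀ i S, vb i S = v i {ℓ i} + v i S)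
    (R : A → Finset J)
    (hdisj : ∀ i k, i ≠ k → Disjoint (R i) (R k))
    (owner : J → A) (howner : ∀ j : J, j ∈ R (owner j))
    (ε' : ℝ) (hε' : 0 ≤ ε')
    (hloc : ∀ i k, i ≠ k → ∀ j ∈ R i,
      (vb i ((R i).erase j) / vb i (R i)) ^ (w i) *
        (vb k (R k ∪ {j}) / vb k (R k)) ^ (w k) ≤ 1 + ε')
    (p : J → ℝ)
    (hp : ∀ j : J, p j = w (owner j) *
      Real.log (vb (owner j) (R (owner j)) / vb (owner j) ((R (owner j)).erase j))) :
    (∀ (i : A) (j : J), j ∈ R i → ∀ k : A,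
        vb k (R k ∪ {j}) / vb k (R k)
          ≤ (1 + ε') ^ (1 / w k) * Real.exp (p j / w k)) ∧
    (∀ (k : A) (T : Finset J),
        vb k (R k ∪ T) / vb k (R k)
          ≤ (1 + ε') ^ ((T.card : ℝ) / w k) * Real.exp ((∑ j ∈ T, p j) / w k)) := by
  classical
  -- Basic facts
  have hvnn : ∀ i (S : Finset J), 0 ≤ v i S := by
    intro i S
    have := hmono i ∅ S (Finset.empty_subset S)
    rw [hv0 i] at this; exact this
  have hsubadd : ∀ i (S : Finset J), v i S ≤ ∑ j ∈ S, v i {j} := by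
    intro i S
    induction S using Finset.induction_on with
    | empty => simp [hv0]
    | @insert a s ha ih =>
      have h1 := hsubmod i {a} s
      have h2 : ({a} : Finset J) ∪ s = insert a s := by
        ext x; simp [or_comm]
      have h3 : 0 ≤ v i ({a} ∩ s) := hvnn i _
      rw [h2] at h1
      rw [Finset.sum_insert ha]
      linarith
  have hℓpos : ∀ i, 0 < v i {ℓ i} := by
    intro i
    by_contra h
    push_neg at h
    have h1 : v i univ ≤ ∑ j : J, v i {j} := hsubadd i univ
    have h2 : v i univ ≤ 0 := by
      refine h1.trans (Finset.sum_nonpos fun j _ => ?_)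
      exact (hℓ i j).trans h
    linarith [hvJ i]
  have hvbpos : ∀ i (S : Finset J), 0 < vb i S := by
    intro i S
    rw [hvb]
    have := hvnn i S
    linarith [hℓpos i]
  have hvbmono : ∀ i (S T : Finset J), S ⊆ T → vb i S ≤ vb i T := by
    intro i S T hST
    rw [hvb, hvb]
    linarith [hmono i S T hST]
  have howner_eq : ∀ (i : A) (j : J), j ∈ R i → owner j = i := by
    intro i j hj
    by_contra h
    exact Finset.disjoint_left.mp (hdisj (owner j) i h) (howner j) hj
  -- Part (a)
  have parta : ∀ (i : A) (j : J), j ∈ R i → ∀ k : A,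
      vb k (R k ∪ {j}) / vb k (R k)
        ≤ (1 + ε') ^ (1 / w k) * Real.exp (p j / w k) := by
    intro i j hj k
    have hioj : owner j = i := howner_eq i j hj
    have hepos : (0:ℝ) < 1 + ε' := by linarith
    have hone_le : (1:ℝ) ≤ (1 + ε') ^ (1 / w k) := by
      have := Real.rpow_le_rpow (by norm_num : (0:ℝ) ≤ 1)
        (by linarith : (1:ℝ) ≤ 1 + ε') (one_div_pos.mpr (hw k)).le
      rwa [Real.one_rpow] at this
    -- p j is nonnegative
    have hpj0 : 0 ≤ p j := by
      rw [hp j]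
      apply mul_nonneg (hw _).le
      apply Real.log_nonneg
      rw [le_div_iff₀ (hvbpos _ _)]
      rw [one_mul]
      exact hvbmono _ _ _ (Finset.erase_subset _ _)
    by_cases hk : k = i
    · subst hk
      have hjk : R k ∪ {j} = R k := by
        rw [Finset.union_eq_left]
        simpa using hj
      rw [hjk, div_self (hvbpos k (R k)).ne']
      have h2 : (1:ℝ) ≤ Real.exp (p j / w k) :=
        Real.one_le_exp (div_nonneg hpj0 (hw k).le)
      nlinarith
    · have hik : i ≠ k := fun h => hk h.symm
      have hloc' := hloc i k hik j hj
      set A' := vb i ((R i).erase j) / vb i (R i) with hA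
      set B := vb i (R i) / vb i ((R i).erase j) with hB
      set x := vb k (R k ∪ {j}) / vb k (R k) with hx
      have hApos : 0 < A' := div_pos (hvbpos _ _) (hvbpos _ _)
      have hBpos : 0 < B := div_pos (hvbpos _ _) (hvbpos _ _)
      have hxpos : 0 < x := div_pos (hvbpos _ _) (hvbpos _ _)
      have hAB : A' * B = 1 := by
        rw [hA, hB, div_mul_div_comm, mul_comm (vb i ((R i).erase j))]
        exact div_self (mul_pos (hvbpos _ _) (hvbpos _ _)).ne'
      have hABw : A' ^ (w i) * B ^ (w i) = 1 := by
        rw [← Real.mul_rpow hApos.le hBpos.le, hAB, Real.one_rpow]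
      -- x ^ (w k) ≤ (1+ε') * B ^ (w i)
      have hxw : x ^ (w k) ≤ (1 + ε') * B ^ (w i) := by
        have h1 : x ^ (w k) = (A' ^ (w i) * x ^ (w k)) * B ^ (w i) := by
          rw [mul_comm (A' ^ (w i)), mul_assoc, hABw, mul_one]
        rw [h1]
        exact mul_le_mul_of_nonneg_right hloc' (Real.rpow_nonneg hBpos.le _)
      -- raise to power 1 / w k
      have hxle : x ≤ ((1 + ε') * B ^ (w i)) ^ (1 / w k) := by
        have h2 := Real.rpow_le_rpow (Real.rpow_nonneg hxpos.le _) hxw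
          (one_div_pos.mpr (hw k)).le
        rwa [← Real.rpow_mul hxpos.le, mul_one_div, div_self (hw k).ne',
          Real.rpow_one] at h2
      have hsplit : ((1 + ε') * B ^ (w i)) ^ (1 / w k)
          = (1 + ε') ^ (1 / w k) * Real.exp (p j / w k) := by
        rw [Real.mul_rpow hepos.le (Real.rpow_nonneg hBpos.le _)]
        congr 1
        rw [← Real.rpow_mul hBpos.le]
        rw [Real.rpow_def_of_pos hBpos]
        congr 1
        rw [hp j, hioj]
        ring
      rw [hsplit] at hxle
      exact hxle
  refine ⟨parta, ?_⟩
  -- Part (b)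
  intro k T
  have hepos : (0:ℝ) < 1 + ε' := by linarith
  -- marginal bound from submodularity
  have hmarg : ∀ T : Finset J,
      v k (R k ∪ T) ≤ v k (R k) + ∑ j ∈ T, (v k (R k ∪ {j}) - v k (R k)) := by
    intro T
    induction T using Finset.induction_on with
    | empty => simp
    | @insert a s ha ih =>
      have h1 := hsubmod k (R k ∪ s) (R k ∪ {a})
      have hint : (R k ∪ s) ∩ (R k ∪ {a}) = R k := by
        ext x
        simp only [Finset.mem_inter, Finset.mem_union, Finset.mem_singleton]
        constructor
        · rintro ⟨h1 | h1, h2 | h2⟩ <;> try assumption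
          exact absurd (h2 ▸ h1) ha
        · tauto
      have hun : (R k ∪ s) ∪ (R k ∪ {a}) = R k ∪ insert a s := by
        ext x
        simp only [Finset.mem_union, Finset.mem_insert, Finset.mem_singleton]
        tauto
      rw [hint, hun] at h1
      rw [Finset.sum_insert ha]
      linarith
  -- vb version
  have hmargb : vb k (R k ∪ T) ≤ vb k (R k) + ∑ j ∈ T, (vb k (R k ∪ {j}) - vb k (R k)) := by
    have h1 := hmarg T
    have h2 : ∑ j ∈ T, (vb k (R k ∪ {j}) - vb k (R k))
        = ∑ j ∈ T, (v k (R k ∪ {j}) - v k (R k)) := by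
      apply Finset.sum_congr rfl
      intro j _
      rw [hvb, hvb]; ring
    rw [h2, hvb k (R k ∪ T), hvb k (R k)]
    linarith
  -- ratio form
  set c := vb k (R k) with hc
  have hcpos : 0 < c := hvbpos k (R k)
  have hratio : vb k (R k ∪ T) / c ≤ 1 + ∑ j ∈ T, (vb k (R k ∪ {j}) / c - 1) := by
    rw [div_le_iff₀ hcpos]
    have h2 : (1 + ∑ j ∈ T, (vb k (R k ∪ {j}) / c - 1)) * c
        = c + ∑ j ∈ T, (vb k (R k ∪ {j}) - c) := by
      rw [add_mul, one_mul, Finset.sum_mul]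
      congr 1
      apply Finset.sum_congr rfl
      intro j _
      field_simp
    rw [h2]
    exact hmargb
  -- 1 + sum ≤ product for factors ≥ 1
  have hprodlem : ∀ (S : Finset J) (f : J → ℝ), (∀ j ∈ S, 1 ≤ f j) →
      1 + ∑ j ∈ S, (f j - 1) ≤ ∏ j ∈ S, f j := by
    intro S f
    induction S using Finset.induction_on with
    | empty => intro _; simp
    | @insert a s ha ih =>
      intro hf
      rw [Finset.sum_insert ha, Finset.prod_insert ha]
      have h1 := ih fun j hj => hf j (Finset.mem_insert_of_mem hj)
      have hfa := hf a (Finset.mem_insert_self a s)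
      have hs : 0 ≤ ∑ j ∈ s, (f j - 1) :=
        Finset.sum_nonneg fun j hj => by linarith [hf j (Finset.mem_insert_of_mem hj)]
      nlinarith
  have hr1 : ∀ j ∈ T, 1 ≤ vb k (R k ∪ {j}) / c := by
    intro j _
    rw [le_div_iff₀ hcpos, one_mul]
    exact hvbmono _ _ _ Finset.subset_union_left
  have hratio2 : vb k (R k ∪ T) / c ≤ ∏ j ∈ T, (vb k (R k ∪ {j}) / c) :=
    hratio.trans (hprodlem T _ hr1)
  -- bound each factor by part (a)
  have hfact : ∀ j ∈ T, vb k (R k ∪ {j}) / c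
      ≤ (1 + ε') ^ (1 / w k) * Real.exp (p j / w k) := by
    intro j _
    exact parta (owner j) j (howner j) k
  have hprod2 : ∏ j ∈ T, (vb k (R k ∪ {j}) / c)
      ≤ ∏ j ∈ T, ((1 + ε') ^ (1 / w k) * Real.exp (p j / w k)) := by
    apply Finset.prod_le_prod
    · intro j _; exact (div_pos (hvbpos _ _) hcpos).le
    · exact hfact
  have hfinal : ∏ j ∈ T, ((1 + ε') ^ (1 / w k) * Real.exp (p j / w k))
      = (1 + ε') ^ ((T.card : ℝ) / w k) * Real.exp ((∑ j ∈ T, p j) / w k) := by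
    rw [Finset.prod_mul_distrib]
    congr 1
    · rw [Finset.prod_const, ← Real.rpow_natCast ((1 + ε') ^ (1 / w k)),
        ← Real.rpow_mul hepos.le]
      congr 1
      ring
    · rw [← Real.exp_sum]
      congr 1
      rw [← Finset.sum_div]
  calc vb k (R k ∪ T) / c ≤ ∏ j ∈ T, (vb k (R k ∪ {j}) / c) := hratio2
    _ ≤ ∏ j ∈ T, ((1 + ε') ^ (1 / w k) * Real.exp (p j / w k)) := hprod2
    _ = _ := hfinal
end

section
/- (Bounded spending) Let R = (R_i)_{i∈Ā} be an ε̄-local optimum with respect to the endowed valuations v̄_i, with prices p_j as defined. Then p(R_i) ≤ w_i for every agent i ∈ Ā, and consequently p(J) ≤ 1. -/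
open Finset

/-- Sum of marginal losses is bounded via submodularity. -/
lemma submod_marg_sum {J : Type*} [DecidableEq J] (v : Finset J → ℝ)
    (hsub : ∀ S T, v (S ∩ T) + v (S ∪ T) ≤ v S + v T)
    (R : Finset J) :
    ∀ S ⊆ R, ∑ j ∈ S, (v R - v (R.erase j)) ≤ v R - v (R \ S) := by
  intro S
  induction S using Finset.induction_on with
  | empty => intro _; simp
  | @insert j S hj ih =>
    intro hins
    have hjR : j ∈ R := hins (mem_insert_self j S)
    have hSR : S ⊆ R := fun x hx => hins (mem_insert_of_mem hx)
    have hIH := ih hSR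
    have hsub' := hsub (R.erase j) (R \ S)
    have h1 : (R.erase j) ∩ (R \ S) = R \ insert j S := by
      ext x
      simp only [Finset.mem_inter, Finset.mem_erase, Finset.mem_sdiff,
        Finset.mem_insert]
      tauto
    have h2 : (R.erase j) ∪ (R \ S) = R := by
      ext x
      simp only [Finset.mem_union, Finset.mem_erase, Finset.mem_sdiff]
      constructor
      · rintro (⟨_, hx⟩ | ⟨hx, _⟩) <;> exact hx
      · intro hx
        by_cases hxj : x = j
        · right; exact ⟨hx, fun h => hj (hxj ▸ h)⟩
        · left; exact ⟨hxj, hx⟩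
    rw [Finset.sum_insert hj]
    rw [h1, h2] at hsub'
    linarith

/-- (Bounded spending, asymmetric case.)
For an `ε̄`-local optimum `R` with prices `p` in the asymmetric local-search setup,
`p(R_i) ≤ w_i` for every agent `i`, and consequently `p(J) ≤ 1`. -/
theorem bounded_spending {J A : Type*} [Fintype J] [DecidableEq J]
    [Fintype A] [Nonempty A]
    (w : A → ℝ) (hw : ∀ i, 0 < w i) (hwsum : ∑ i, w i ≤ 1)
    (v : A → Finset J → ℝ)
    (hmono : ∀ i, ∀ S T : Finset J, S ⊆ T → v i S ≤ v i T)
    (hsubmod : ∀ i, ∀ S T : Finset J, v i (S ∩ T) + v i (S ∪ T) ≤ v i S + v i T)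
    (hv0 : ∀ i, v i ∅ = 0) (hvJ : ∀ i, 0 < v i (univ : Finset J))
    (ℓ : A → J) (hℓ : ∀ i, ∀ j : J, v i {j} ≤ v i {ℓ i})
    (vb : A → Finset J → ℝ) (hvb : ∀ i S, vb i S = v i {ℓ i} + v i S)
    (R : A → Finset J)
    (hdisj : ∀ i k, i ≠ k → Disjoint (R i) (R k))
    (owner : J → A) (howner : ∀ j : J, j ∈ R (owner j))
    (ε' : ℝ) (hε' : 0 ≤ ε')
    (hloc : ∀ i k, i ≠ k → ∀ j ∈ R i,
      (vb i ((R i).erase j) / vb i (R i)) ^ (w i) *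
        (vb k (R k ∪ {j}) / vb k (R k)) ^ (w k) ≤ 1 + ε')
    (p : J → ℝ)
    (hp : ∀ j : J, p j = w (owner j) *
      Real.log (vb (owner j) (R (owner j)) / vb (owner j) ((R (owner j)).erase j))) :
    (∀ i : A, ∑ j ∈ R i, p j ≤ w i) ∧ ∑ j : J, p j ≤ 1 := by
  classical
  -- ownership is determined
  have hown : ∀ i, ∀ j ∈ R i, owner j = i := by
    intro i j hj
    by_contra h
    exact (Finset.disjoint_left.mp (hdisj i (owner j) (fun h' => h h'.symm)) hj)
      (howner j)
  -- basic nonnegativity facts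
  have hnn : ∀ i (S : Finset J), 0 ≤ v i S := by
    intro i S
    calc (0:ℝ) = v i ∅ := (hv0 i).symm
    _ ≤ v i S := hmono i ∅ S (Finset.empty_subset S)
  -- key: v i (R i) ≤ vb i ((R i).erase j) for j ∈ R i
  have hkey : ∀ i, ∀ j ∈ R i, v i (R i) ≤ vb i ((R i).erase j) := by
    intro i j hj
    have hs := hsubmod i ((R i).erase j) {j}
    have hint : (R i).erase j ∩ {j} = ∅ := by
      ext x
      simp only [Finset.mem_inter, Finset.mem_erase, Finset.mem_singleton,
        Finset.notMem_empty, iff_false]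
      tauto
    have hun : (R i).erase j ∪ {j} = R i := by
      ext x
      simp only [Finset.mem_union, Finset.mem_erase, Finset.mem_singleton]
      constructor
      · rintro (⟨_, hx⟩ | rfl) <;> [exact hx; exact hj]
      · intro hx
        by_cases hxj : x = j
        · right; exact hxj
        · left; exact ⟨hxj, hx⟩
    rw [hint, hun, hv0 i] at hs
    have := hℓ i j
    rw [hvb]
    linarith
  -- per-agent bound
  have hmain : ∀ i : A, ∑ j ∈ R i, p j ≤ w i := by
    intro i
    have hsum_eq : ∑ j ∈ R i, p j =
        w i * ∑ j ∈ R i, Real.log (vb i (R i) / vb i ((R i).erase j)) := by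
      rw [Finset.mul_sum]
      refine Finset.sum_congr rfl fun j hj => ?_
      rw [hp j, hown i j hj]
    rw [hsum_eq]
    rcases eq_or_lt_of_le (hnn i (R i)) with hV | hV
    · -- v i (R i) = 0 : every price is zero
      have hzero : ∀ j ∈ R i, Real.log (vb i (R i) / vb i ((R i).erase j)) = 0 := by
        intro j hj
        have he : v i ((R i).erase j) = 0 := by
          have h1 := hmono i ((R i).erase j) (R i) (Finset.erase_subset j (R i))
          have h2 := hnn i ((R i).erase j)
          linarith [hV.symm ▸ h1]
        have hR0 : v i (R i) = 0 := hV.symm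
        rw [hvb, hvb, he, hR0]
        rcases eq_or_ne (v i {ℓ i}) 0 with hb | hb
        · simp [hb]
        · rw [add_zero, div_self hb, Real.log_one]
      rw [Finset.sum_congr rfl hzero]
      simp [le_of_lt (hw i)]
    · -- v i (R i) > 0
      set Vr := v i (R i) with hVr
      have hterm : ∀ j ∈ R i,
          Real.log (vb i (R i) / vb i ((R i).erase j)) ≤ (Vr - v i ((R i).erase j)) / Vr := by
        intro j hj
        have hden : Vr ≤ vb i ((R i).erase j) := hkey i j hj
        have hdenpos : 0 < vb i ((R i).erase j) := lt_of_lt_of_le hV hden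
        have hnum : vb i ((R i).erase j) ≤ vb i (R i) := by
          rw [hvb, hvb]
          have := hmono i ((R i).erase j) (R i) (Finset.erase_subset j (R i))
          linarith
        have hnumpos : 0 < vb i (R i) := lt_of_lt_of_le hdenpos hnum
        have hratio : 0 < vb i (R i) / vb i ((R i).erase j) := div_pos hnumpos hdenpos
        have hlog := Real.log_le_sub_one_of_pos hratio
        have h1 : vb i (R i) / vb i ((R i).erase j) - 1
            = (Vr - v i ((R i).erase j)) / vb i ((R i).erase j) := by
          field_simp
          rw [hvb, hvb]
          ring
        have h2 : (Vr - v i ((R i).erase j)) / vb i ((R i).erase j)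
            ≤ (Vr - v i ((R i).erase j)) / Vr := by
          apply div_le_div_of_nonneg_left _ hV hden
          have := hmono i ((R i).erase j) (R i) (Finset.erase_subset j (R i))
          linarith
        calc Real.log (vb i (R i) / vb i ((R i).erase j))
            ≤ vb i (R i) / vb i ((R i).erase j) - 1 := hlog
          _ = (Vr - v i ((R i).erase j)) / vb i ((R i).erase j) := h1
          _ ≤ (Vr - v i ((R i).erase j)) / Vr := h2
      have hsum1 : ∑ j ∈ R i, Real.log (vb i (R i) / vb i ((R i).erase j))
          ≤ ∑ j ∈ R i, (Vr - v i ((R i).erase j)) / Vr :=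
        Finset.sum_le_sum hterm
      have hsum2 : ∑ j ∈ R i, (Vr - v i ((R i).erase j)) / Vr ≤ 1 := by
        rw [← Finset.sum_div]
        rw [div_le_one hV]
        have := submod_marg_sum (v i) (hsubmod i) (R i) (R i) (Finset.Subset.refl _)
        rw [Finset.sdiff_self, hv0 i] at this
        linarith
      have : ∑ j ∈ R i, Real.log (vb i (R i) / vb i ((R i).erase j)) ≤ 1 :=
        le_trans hsum1 hsum2
      calc w i * ∑ j ∈ R i, Real.log (vb i (R i) / vb i ((R i).erase j))
          ≤ w i * 1 := by
            exact mul_le_mul_of_nonneg_left this (le_of_lt (hw i))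
        _ = w i := mul_one _
  refine ⟨hmain, ?_⟩
  -- nonnegativity of prices
  have hpnn : ∀ j : J, 0 ≤ p j := by
    intro j
    set i := owner j with hi
    have hj : j ∈ R i := howner j
    rw [hp j, ← hi]
    rcases eq_or_lt_of_le (hnn i (R i)) with hV | hV
    · have he : v i ((R i).erase j) = 0 := by
        have h1 := hmono i ((R i).erase j) (R i) (Finset.erase_subset j (R i))
        have h2 := hnn i ((R i).erase j)
        linarith [hV.symm ▸ h1]
      rw [hvb, hvb, he, hV.symm]
      rcases eq_or_ne (v i {ℓ i}) 0 with hb | hb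
      · simp [hb]
      · rw [add_zero, div_self hb, Real.log_one, mul_zero]
    · have hden : v i (R i) ≤ vb i ((R i).erase j) := hkey i j hj
      have hdenpos : 0 < vb i ((R i).erase j) := lt_of_lt_of_le hV hden
      have hnum : vb i ((R i).erase j) ≤ vb i (R i) := by
        rw [hvb, hvb]
        have := hmono i ((R i).erase j) (R i) (Finset.erase_subset j (R i))
        linarith
      have : (1:ℝ) ≤ vb i (R i) / vb i ((R i).erase j) :=
        (one_le_div hdenpos).mpr hnum
      have hlog : 0 ≤ Real.log (vb i (R i) / vb i ((R i).erase j)) :=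
        Real.log_nonneg this
      exact mul_nonneg (le_of_lt (hw i)) hlog
  -- total spending
  have hfib : ∑ j : J, p j =
      ∑ i : A, ∑ j ∈ Finset.univ.filter (fun j => owner j = i), p j :=
    (Finset.sum_fiberwise Finset.univ owner p).symm
  rw [hfib]
  calc ∑ i : A, ∑ j ∈ Finset.univ.filter (fun j => owner j = i), p j
      ≤ ∑ i : A, ∑ j ∈ R i, p j := by
        refine Finset.sum_le_sum fun i _ => ?_
        refine Finset.sum_le_sum_of_subset_of_nonneg ?_ (fun j _ _ => hpnn j)
        intro j hj
        rw [Finset.mem_filter] at hj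
        exact hj.2 ▸ howner j
    _ ≤ ∑ i : A, w i := Finset.sum_le_sum fun i _ => hmain i
    _ ≤ 1 := hwsum
end

section
/- (Approximate first welfare theorem for Nash social welfare) Let R = (R_i)_{i∈Ā} be a local optimum (i.e., an ε̄-local optimum with ε̄ = 0) with respect to the endowed valuations v̄_i, and let S = (S_i)_{i∈Ā} be a partition of J maximizing ∏_{i∈Ā} v̄_i(S_i)^{w_i} over all partitions of J among the agents of Ā. Then ∏_{i∈Ā} v̄_i(R_i)^{w_i} ≥ (1/e) · ∏_{i∈Ā} v̄_i(S_i)^{w_i}. -/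
/-!
Work with logarithms of the endowed valuations. For `j ∈ R i` and `k ≠ i`, local optimality
says that the weighted log-gain of `k` from receiving `j` is at most the weighted log-loss of
`i` from giving it away. By submodularity, the log-gain of `k` in passing from `R k` to `S k` is
at most the sum of its single-item log-gains, and summing over the two partitions bounds
`∑ w_k log (v̄_k(S_k) / v̄_k(R_k))` by `∑ w_i ∑_{j ∈ R_i} log (v̄_i(R_i) / v̄_i(R_i ∖ j))`.
Each inner sum is at most `1`: since `v_i(ℓ(i)) ≥ v_i(j)`, every denominator is at least
`max (v_i(ℓ(i)), v_i(R_i))`, while the marginal values `v_i(R_i) - v_i(R_i ∖ j)` sum to at most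
`v_i(R_i)`. With `∑ w_i ≤ 1` this gives the factor `e`.
-/

open Finset Real

section Submodular

variable {α : Type*} [DecidableEq α]

def IsSubmodular (v : Finset α → ℝ) : Prop :=
  ∀ S T, v (S ∩ T) + v (S ∪ T) ≤ v S + v T

variable {v : Finset α → ℝ}

lemma IsSubmodular.const_add (hv : IsSubmodular v) (c : ℝ) :
    IsSubmodular fun S => c + v S :=
  fun S T => by linarith [hv S T]

lemma IsSubmodular.insert_sub_le_insert_sub (hv : IsSubmodular v) {S T : Finset α}
    (hST : S ⊆ T) {a : α} (ha : a ∉ T) :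
    v (insert a T) - v T ≤ v (insert a S) - v S := by
  have hinter : insert a S ∩ T = S := by grind
  have hunion : insert a S ∪ T = insert a T := by grind
  linarith [hinter ▸ hunion ▸ hv (insert a S) T]

lemma IsSubmodular.sub_le_sum_singleton (hv : IsSubmodular v) (T : Finset α) :
    v T - v ∅ ≤ ∑ j ∈ T, (v {j} - v ∅) := by
  induction T using Finset.induction_on with
  | empty => simp
  | insert a T ha ih =>
    have hmarginal := hv.insert_sub_le_insert_sub (empty_subset T) ha
    rw [insert_empty] at hmarginal
    rw [sum_insert ha]
    linarith

lemma IsSubmodular.sum_sub_erase_le (hv : IsSubmodular v) (T : Finset α) :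
    ∑ j ∈ T, (v T - v (T.erase j)) ≤ v T - v ∅ := by
  induction T using Finset.induction_on with
  | empty => simp
  | insert a T ha ih =>
    have hmarginal : ∀ j ∈ T,
        v (insert a T) - v ((insert a T).erase j) ≤ v T - v (T.erase j) := by
      intro j hj
      have hja : j ≠ a := ne_of_mem_of_not_mem hj ha
      have hdim := hv.insert_sub_le_insert_sub (subset_insert a (T.erase j))
        (a := j) (by simp [hja])
      rwa [insert_comm, insert_erase hj, ← erase_insert_of_ne hja.symm] at hdim
    rw [sum_insert ha, erase_insert ha]
    linarith [sum_le_sum hmarginal]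

lemma IsSubmodular.pos_of_forall_singleton_le [Fintype α] (hv : IsSubmodular v)
    (h0 : v ∅ = 0) (huniv : 0 < v univ) {a : α} (ha : ∀ j, v {j} ≤ v {a}) :
    0 < v {a} := by
  by_contra! h
  have hsingle : ∑ j, (v {j} - v ∅) ≤ 0 := sum_nonpos fun j _ => by linarith [ha j]
  linarith [hv.sub_le_sum_singleton univ]

lemma IsSubmodular.div_le_div_of_subset (hv : IsSubmodular v) (hmono : Monotone v)
    (hpos : ∀ S, 0 < v S) {R T : Finset α} (hRT : R ⊆ T) (a : α) :
    v (insert a T) / v T ≤ v (insert a R) / v R := by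
  rw [div_le_div_iff₀ (hpos T) (hpos R)]
  have hgain := hmono (subset_insert a R)
  by_cases haT : a ∈ T
  · rw [insert_eq_of_mem haT]
    nlinarith [hpos T]
  · nlinarith [hv.insert_sub_le_insert_sub hRT haT, hmono hRT, hpos R, hpos T]

lemma IsSubmodular.log_sub_log_le_sum_log_div (hv : IsSubmodular v) (hmono : Monotone v)
    (hpos : ∀ S, 0 < v S) (R S : Finset α) :
    log (v S) - log (v R) ≤ ∑ j ∈ S, log (v (R ∪ {j}) / v R) := by
  have hunion : ∀ S, log (v (R ∪ S)) - log (v R) ≤ ∑ j ∈ S, log (v (R ∪ {j}) / v R) := by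
    intro S
    induction S using Finset.induction_on with
    | empty => simp
    | insert a S ha ih =>
      have hstep := log_le_log (div_pos (hpos _) (hpos _))
        (hv.div_le_div_of_subset hmono hpos (subset_union_left (s₁ := R) (s₂ := S)) a)
      rw [log_div (hpos _).ne' (hpos _).ne'] at hstep
      rw [sum_insert ha, union_insert, union_singleton]
      linarith
  linarith [hunion S, log_le_log (hpos S) (hmono (subset_union_right (s₁ := R)))]

lemma IsSubmodular.sum_log_div_erase_le_one (hv : IsSubmodular v) (hmono : Monotone v)
    (h0 : v ∅ = 0) {c : ℝ} (hc : 0 < c) {T : Finset α} (hT : ∀ j ∈ T, v {j} ≤ c) :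
    ∑ j ∈ T, log ((c + v T) / (c + v (T.erase j))) ≤ 1 := by
  set m := max c (v T)
  have hm : 0 < m := lt_max_of_lt_left hc
  have hterm : ∀ j ∈ T,
      log ((c + v T) / (c + v (T.erase j))) ≤ (v T - v (T.erase j)) / m := by
    intro j hj
    have hmarginal : v T - v (T.erase j) ≤ v {j} := by
      have hdim := hv.insert_sub_le_insert_sub (empty_subset (T.erase j)) (notMem_erase j T)
      rwa [insert_erase hj, insert_empty, h0, sub_zero] at hdim
    have hrest : 0 ≤ v (T.erase j) := h0 ▸ hmono (empty_subset _)
    have hle : v (T.erase j) ≤ v T := hmono (erase_subset j T)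
    have hden : m ≤ c + v (T.erase j) := max_le (by linarith) (by linarith [hT j hj])
    calc log ((c + v T) / (c + v (T.erase j)))
        ≤ (c + v T) / (c + v (T.erase j)) - 1 :=
          log_le_sub_one_of_pos (div_pos (by linarith) (by linarith))
      _ = (v T - v (T.erase j)) / (c + v (T.erase j)) := by field_simp; ring
      _ ≤ (v T - v (T.erase j)) / m :=
        div_le_div_of_nonneg_left (sub_nonneg.2 hle) hm hden
  calc ∑ j ∈ T, log ((c + v T) / (c + v (T.erase j)))
      ≤ ∑ j ∈ T, (v T - v (T.erase j)) / m := sum_le_sum hterm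
    _ = (∑ j ∈ T, (v T - v (T.erase j))) / m := (sum_div ..).symm
    _ ≤ v T / m := by gcongr; simpa [h0] using hv.sum_sub_erase_le T
    _ ≤ 1 := (div_le_one hm).2 (le_max_right _ _)

end Submodular

lemma mul_log_div_le_mul_log_div_of_rpow_mul_rpow_le_one {a b c d p q : ℝ} (ha : 0 < a)
    (hb : 0 < b) (hc : 0 < c) (hd : 0 < d) (h : (a / b) ^ p * (c / d) ^ q ≤ 1) :
    q * log (c / d) ≤ p * log (b / a) := by
  have hab := div_pos ha hb
  have hcd := div_pos hc hd
  have hlog := log_le_log (by positivity) h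
  rw [log_mul (rpow_pos_of_pos hab _).ne' (rpow_pos_of_pos hcd _).ne', log_rpow hab,
    log_rpow hcd, log_one] at hlog
  rw [← inv_div a b, log_inv, mul_neg]
  linarith

lemma sum_sum_le_sum_sum_of_partition {ι α M : Type*} [Fintype ι] [Fintype α] [DecidableEq α]
    [AddCommMonoid M] [PartialOrder M] [IsOrderedAddMonoid M] {R S : ι → Finset α}
    (hRcover : univ.biUnion R = univ) (hRdisj : ∀ i k, i ≠ k → Disjoint (R i) (R k))
    (hSdisj : ∀ i k, i ≠ k → Disjoint (S i) (S k)) {f g : ι → α → M}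
    (hg : ∀ i, ∀ j ∈ R i, 0 ≤ g i j) (hfg : ∀ i k, ∀ j ∈ R i, j ∈ S k → f k j ≤ g i j) :
    ∑ k, ∑ j ∈ S k, f k j ≤ ∑ i, ∑ j ∈ R i, g i j := by
  have howner : ∀ j, ∃ i, j ∈ R i := fun j => by simpa using hRcover.ge (mem_univ j)
  choose o ho using howner
  have ho_eq : ∀ i, ∀ j ∈ R i, o j = i := fun i j hj =>
    by_contra fun h => disjoint_left.1 (hRdisj _ _ h) (ho j) hj
  calc ∑ k, ∑ j ∈ S k, f k j
      ≤ ∑ k, ∑ j ∈ S k, g (o j) j :=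
        sum_le_sum fun k _ => sum_le_sum fun j hj => hfg _ _ _ (ho j) hj
    _ = ∑ j ∈ univ.biUnion S, g (o j) j :=
        (sum_biUnion fun i _ k _ hik => hSdisj i k hik).symm
    _ ≤ ∑ j, g (o j) j := sum_le_univ_sum_of_nonneg fun j => hg _ _ (ho j)
    _ = ∑ j ∈ univ.biUnion R, g (o j) j := by rw [hRcover]
    _ = ∑ i, ∑ j ∈ R i, g (o j) j := sum_biUnion fun i _ k _ hik => hRdisj i k hik
    _ = ∑ i, ∑ j ∈ R i, g i j :=
        sum_congr rfl fun i _ => sum_congr rfl fun j hj => by rw [ho_eq i j hj]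

lemma prod_rpow_eq_exp_sum_mul_log {ι : Type*} (s : Finset ι) {x : ι → ℝ}
    (hx : ∀ i ∈ s, 0 < x i) (w : ι → ℝ) :
    ∏ i ∈ s, x i ^ w i = exp (∑ i ∈ s, w i * log (x i)) := by
  rw [exp_sum]
  exact prod_congr rfl fun i hi => by rw [rpow_def_of_pos (hx i hi), mul_comm]

lemma sum_mul_log_sub_sum_mul_log_le_one {ι α : Type*} [Fintype ι] [Fintype α]
    [DecidableEq α] {u : ι → Finset α → ℝ} (hsub : ∀ i, IsSubmodular (u i))
    (hmono : ∀ i, Monotone (u i)) (hpos : ∀ i S, 0 < u i S) {w : ι → ℝ} (hw : ∀ i, 0 ≤ w i)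
    (hwsum : ∑ i, w i ≤ 1) {R S : ι → Finset α} (hRcover : univ.biUnion R = univ)
    (hRdisj : ∀ i k, i ≠ k → Disjoint (R i) (R k)) (hSdisj : ∀ i k, i ≠ k → Disjoint (S i) (S k))
    (hloss : ∀ i, ∑ j ∈ R i, log (u i (R i) / u i ((R i).erase j)) ≤ 1)
    (hloc : ∀ i k, i ≠ k → ∀ j ∈ R i,
      w k * log (u k (R k ∪ {j}) / u k (R k)) ≤ w i * log (u i (R i) / u i ((R i).erase j))) :
    ∑ i, w i * log (u i (S i)) - ∑ i, w i * log (u i (R i)) ≤ 1 := by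
  have hloss_nonneg i j : 0 ≤ w i * log (u i (R i) / u i ((R i).erase j)) :=
    mul_nonneg (hw i) (log_nonneg ((one_le_div (hpos _ _)).2 (hmono i (erase_subset j _))))
  have hgain_le_loss : ∀ i k, ∀ j ∈ R i, j ∈ S k →
      w k * log (u k (R k ∪ {j}) / u k (R k)) ≤ w i * log (u i (R i) / u i ((R i).erase j)) := by
    intro i k j hjR _
    rcases eq_or_ne i k with rfl | hik
    · rw [union_singleton, insert_eq_of_mem hjR, div_self (hpos _ _).ne', log_one, mul_zero]
      exact hloss_nonneg i j
    · exact hloc i k hik j hjR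
  calc ∑ i, w i * log (u i (S i)) - ∑ i, w i * log (u i (R i))
      = ∑ k, w k * (log (u k (S k)) - log (u k (R k))) := by
        rw [← sum_sub_distrib]; simp_rw [mul_sub]
    _ ≤ ∑ k, ∑ j ∈ S k, w k * log (u k (R k ∪ {j}) / u k (R k)) :=
        sum_le_sum fun k _ => by
          rw [← mul_sum]
          exact mul_le_mul_of_nonneg_left
            ((hsub k).log_sub_log_le_sum_log_div (hmono k) (hpos k) _ _) (hw k)
    _ ≤ ∑ i, ∑ j ∈ R i, w i * log (u i (R i) / u i ((R i).erase j)) :=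
        sum_sum_le_sum_sum_of_partition hRcover hRdisj hSdisj (fun i j _ => hloss_nonneg i j)
          hgain_le_loss
    _ ≤ ∑ i, w i := sum_le_sum fun i _ => by
        rw [← mul_sum]; exact mul_le_of_le_one_right (hw i) (hloss i)
    _ ≤ 1 := hwsum

theorem first_welfare_theorem_NSW_general {J A : Type*} [Fintype J] [DecidableEq J]
    [Fintype A]
    (w : A → ℝ) (hw : ∀ i, 0 < w i) (hwsum : ∑ i, w i ≤ 1)
    (v : A → Finset J → ℝ)
    (hmono : ∀ i, ∀ S T : Finset J, S ⊆ T → v i S ≤ v i T)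
    (hsubmod : ∀ i, ∀ S T : Finset J, v i (S ∩ T) + v i (S ∪ T) ≤ v i S + v i T)
    (hv0 : ∀ i, v i ∅ = 0) (hvJ : ∀ i, 0 < v i (univ : Finset J))
    (ℓ : A → J) (hℓ : ∀ i, ∀ j : J, v i {j} ≤ v i {ℓ i})
    (vb : A → Finset J → ℝ) (hvb : ∀ i S, vb i S = v i {ℓ i} + v i S)
    (R : A → Finset J)
    (hRdisj : ∀ i k, i ≠ k → Disjoint (R i) (R k))
    (hRcover : Finset.univ.biUnion R = (univ : Finset J))
    (hloc : ∀ i k, i ≠ k → ∀ j ∈ R i,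
      (vb i ((R i).erase j) / vb i (R i)) ^ (w i) *
        (vb k (R k ∪ {j}) / vb k (R k)) ^ (w k) ≤ 1)
    (S : A → Finset J)
    (hSdisj : ∀ i k, i ≠ k → Disjoint (S i) (S k)) :
    (1 / Real.exp 1) * ∏ i, vb i (S i) ^ (w i) ≤ ∏ i, vb i (R i) ^ (w i) := by
  have hvb_eq i : vb i = fun T => v i {ℓ i} + v i T := funext (hvb i)
  have hℓpos i : 0 < v i {ℓ i} :=
    IsSubmodular.pos_of_forall_singleton_le (hsubmod i) (hv0 i) (hvJ i) (hℓ i)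
  have hpos i T : 0 < vb i T := by
    rw [hvb]; linarith [hℓpos i, hv0 i ▸ hmono i ∅ T (empty_subset T)]
  have hvb_mono i : Monotone (vb i) := by
    rw [hvb_eq]; exact fun S T hST => add_le_add_right (hmono i S T hST) _
  have hloss i : ∑ j ∈ R i, log (vb i (R i) / vb i ((R i).erase j)) ≤ 1 := by
    simpa only [hvb] using IsSubmodular.sum_log_div_erase_le_one (hsubmod i) (hmono i) (hv0 i)
      (hℓpos i) fun j _ => hℓ i j
  have hlog := sum_mul_log_sub_sum_mul_log_le_one
    (fun i => hvb_eq i ▸ IsSubmodular.const_add (hsubmod i) _) hvb_mono hpos (fun i => (hw i).le)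
    hwsum hRcover hRdisj hSdisj hloss fun i k hik j hj =>
      mul_log_div_le_mul_log_div_of_rpow_mul_rpow_le_one (hpos _ _) (hpos _ _) (hpos _ _)
        (hpos _ _) (hloc i k hik j hj)
  rw [prod_rpow_eq_exp_sum_mul_log _ (fun i _ => hpos i (S i)),
    prod_rpow_eq_exp_sum_mul_log _ (fun i _ => hpos i (R i)), one_div, ← exp_neg, ← exp_add]
  exact exp_le_exp.2 (by linarith)

/-- (Approximate first welfare theorem for Nash social welfare.)
Let `R` be a (0-)local optimum with respect to the endowed valuations `v̄_i`, and let
`S` be a partition of `J` maximizing `∏ v̄_i(S_i)^{w_i}` over all partitions of `J`.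
Then `∏ v̄_i(R_i)^{w_i} ≥ (1/e) · ∏ v̄_i(S_i)^{w_i}`. -/
theorem first_welfare_theorem_NSW {J A : Type*} [Fintype J] [DecidableEq J]
    [Fintype A] [DecidableEq A] [Nonempty A]
    (w : A → ℝ) (hw : ∀ i, 0 < w i) (hwsum : ∑ i, w i ≤ 1)
    (v : A → Finset J → ℝ)
    (hmono : ∀ i, ∀ S T : Finset J, S ⊆ T → v i S ≤ v i T)
    (hsubmod : ∀ i, ∀ S T : Finset J, v i (S ∩ T) + v i (S ∪ T) ≤ v i S + v i T)
    (hv0 : ∀ i, v i ∅ = 0) (hvJ : ∀ i, 0 < v i (univ : Finset J))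
    (ℓ : A → J) (hℓ : ∀ i, ∀ j : J, v i {j} ≤ v i {ℓ i})
    (vb : A → Finset J → ℝ) (hvb : ∀ i S, vb i S = v i {ℓ i} + v i S)
    (R : A → Finset J)
    (hRdisj : ∀ i k, i ≠ k → Disjoint (R i) (R k))
    (hRcover : Finset.univ.biUnion R = (univ : Finset J))
    (hloc : ∀ i k, i ≠ k → ∀ j ∈ R i,
      (vb i ((R i).erase j) / vb i (R i)) ^ (w i) *
        (vb k (R k ∪ {j}) / vb k (R k)) ^ (w k) ≤ 1)
    (S : A → Finset J)
    (hSdisj : ∀ i k, i ≠ k → Disjoint (S i) (S k))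
    (hScover : Finset.univ.biUnion S = (univ : Finset J))
    (hSopt : ∀ S' : A → Finset J, (∀ i k, i ≠ k → Disjoint (S' i) (S' k)) →
      Finset.univ.biUnion S' = (univ : Finset J) →
      ∏ i, vb i (S' i) ^ (w i) ≤ ∏ i, vb i (S i) ^ (w i)) :
    (1 / Real.exp 1) * ∏ i, vb i (S i) ^ (w i) ≤ ∏ i, vb i (R i) ^ (w i) :=
  first_welfare_theorem_NSW_general w hw hwsum v hmono hsubmod hv0 hvJ ℓ hℓ vb hvb R hRdisj hRcover
    hloc S hSdisj
end

section
/- Let ε ≥ 0, let m be a positive integer with |J| ≤ m, and set ε̄ := (1+ε)^{1/m} − 1. Let R = (R_i)_{i∈Ā} be an ε̄-local optimum with respect to the endowed valuations v̄_i. Let (S_i)_{i∈A} be any partition of J among all agents of A, and let h_i ≥ 0 (i ∈ A) be reals with Σ_{i∈A} h_i ≤ n. Then ∏_{i ∈ A∖Ā} h_i^{w_i} · ∏_{i∈Ā} ( v_i(S_i) / max{ v_i(ℓ(i)), v_i(R_i) } + h_i )^{w_i} ≤ (1+ε)·(2 + n·w_max)·e. -/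
open Finset

theorem aux_exchange {J : Type*} [DecidableEq J] (f : Finset J → ℝ)
    (hsub : ∀ S T : Finset J, f (S ∩ T) + f (S ∪ T) ≤ f S + f T)
    {X Y : Finset J} {a : J} (hXY : X ⊆ Y) (ha : a ∉ Y) :
    f (insert a Y) + f X ≤ f (insert a X) + f Y := by
  have h := hsub (insert a X) Y
  have h1 : insert a X ∩ Y = X := by
    ext x
    simp only [Finset.mem_inter, Finset.mem_insert]
    have hx' : x ∈ X → x ∈ Y := fun hx => hXY hx
    have ha' : x = a → x ∈ Y → False := fun he hy => ha (he ▸ hy)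
    tauto
  have h2 : insert a X ∪ Y = insert a Y := by
    ext x
    simp only [Finset.mem_union, Finset.mem_insert]
    have hx' : x ∈ X → x ∈ Y := fun hx => hXY hx
    tauto
  rw [h1, h2] at h
  linarith

theorem aux_gain {J : Type*} [DecidableEq J] (f : Finset J → ℝ)
    (hsub : ∀ S T : Finset J, f (S ∩ T) + f (S ∪ T) ≤ f S + f T) :
    ∀ (D X : Finset J), Disjoint D X →
      f (X ∪ D) ≤ f X + ∑ j ∈ D, (f (X ∪ {j}) - f X) := by
  intro D
  induction D using Finset.induction_on with
  | empty => intro X _; simp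
  | @insert a D ha ih =>
    intro X hdisj
    obtain ⟨haX, hDX⟩ := Finset.disjoint_insert_left.mp hdisj
    have haXD : a ∉ X ∪ D := by simp [haX, ha]
    have hx := aux_exchange f hsub (Finset.subset_union_left (s₁ := X) (s₂ := D)) haXD
    have hih := ih X hDX
    rw [Finset.sum_insert ha]
    rw [Finset.union_insert]
    have hs : X ∪ {a} = insert a X := by rw [Finset.union_comm, ← Finset.insert_eq]
    rw [hs]
    linarith

theorem aux_loss {J : Type*} [DecidableEq J] (f : Finset J → ℝ)
    (hsub : ∀ S T : Finset J, f (S ∩ T) + f (S ∪ T) ≤ f S + f T) :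
    ∀ (T R : Finset J), T ⊆ R →
      ∑ j ∈ T, (f R - f (R.erase j)) ≤ f R - f (R \ T) := by
  intro T
  induction T using Finset.induction_on with
  | empty => intro R _; simp
  | @insert a T ha ih =>
    intro R hTR
    have haR : a ∈ R := hTR (Finset.mem_insert_self a T)
    have hTR' : T ⊆ R := (Finset.subset_insert a T).trans hTR
    have h1 : R \ insert a T = (R \ T).erase a := by
      ext x
      simp only [Finset.mem_sdiff, Finset.mem_erase, Finset.mem_insert]
      tauto
    have hsubXY : (R \ T).erase a ⊆ R.erase a :=
      Finset.erase_subset_erase a Finset.sdiff_subset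
    have haY : a ∉ R.erase a := Finset.notMem_erase a R
    have haRT : a ∈ R \ T := Finset.mem_sdiff.mpr ⟨haR, ha⟩
    have h2 := aux_exchange f hsub hsubXY haY
    rw [Finset.insert_erase haR, Finset.insert_erase haRT] at h2
    have hih := ih R hTR'
    rw [Finset.sum_insert ha, h1]
    linarith

theorem aux_prod_one_add {ι : Type*} [DecidableEq ι] :
    ∀ (D : Finset ι) (c : ι → ℝ), (∀ j ∈ D, 0 ≤ c j) →
      1 + ∑ j ∈ D, c j ≤ ∏ j ∈ D, (1 + c j) := by
  intro D
  induction D using Finset.induction_on with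
  | empty => intro c _; simp
  | @insert a D ha ih =>
    intro c hc
    have hca : 0 ≤ c a := hc a (Finset.mem_insert_self _ _)
    have hc' : ∀ j ∈ D, 0 ≤ c j := fun j hj => hc j (Finset.mem_insert_of_mem hj)
    have hsum : 0 ≤ ∑ j ∈ D, c j := Finset.sum_nonneg hc'
    rw [Finset.sum_insert ha, Finset.prod_insert ha]
    have hih := ih c hc'
    nlinarith

theorem aux_one_le_prod {ι : Type*} (s : Finset ι) (f : ι → ℝ)
    (h : ∀ i ∈ s, 1 ≤ f i) : 1 ≤ ∏ i ∈ s, f i := by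
  calc (1:ℝ) = ∏ _i ∈ s, 1 := by simp
    _ ≤ ∏ i ∈ s, f i := Finset.prod_le_prod (by simp) h

theorem aux_prod_subset {ι : Type*} [DecidableEq ι] (s t : Finset ι) (hst : s ⊆ t) (f : ι → ℝ)
    (h0 : ∀ i ∈ s, 0 ≤ f i) (h1 : ∀ i ∈ t, i ∉ s → 1 ≤ f i) :
    ∏ i ∈ s, f i ≤ ∏ i ∈ t, f i := by
  rw [← Finset.prod_sdiff hst]
  have hone := aux_one_le_prod (t \ s) f
    (fun i hi => h1 i (Finset.mem_sdiff.mp hi).1 (Finset.mem_sdiff.mp hi).2)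
  exact le_mul_of_one_le_left (Finset.prod_nonneg h0) hone

theorem aux_le_sum_singletons {J : Type*} [DecidableEq J] (f : Finset J → ℝ)
    (hsub : ∀ S T : Finset J, f (S ∩ T) + f (S ∪ T) ≤ f S + f T)
    (hnn : ∀ T : Finset J, 0 ≤ f T) (hf0 : f ∅ = 0) :
    ∀ T : Finset J, f T ≤ ∑ j ∈ T, f {j} := by
  intro T
  induction T using Finset.induction_on with
  | empty => simp [hf0]
  | @insert a T ha ih =>
    have h := hsub {a} T
    have h1 : 0 ≤ f ({a} ∩ T) := hnn _
    rw [← Finset.insert_eq] at h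
    rw [Finset.sum_insert ha]
    linarith

/-- (Lemma bounding the ratio, asymmetric case.)
Let `ε ≥ 0`, `|J| ≤ m`, `ε̄ := (1+ε)^{1/m} − 1`, and let `R` be an `ε̄`-local optimum
with respect to the endowed valuations `v̄_i`. For any partition `(S_i)_{i∈A}` of `J` and
reals `h_i ≥ 0` with `Σ h_i ≤ n`,
`∏_{i∈A∖Ā} h_i^{w_i} · ∏_{i∈Ā} (v_i(S_i)/max{v_i(ℓ(i)),v_i(R_i)} + h_i)^{w_i}
  ≤ (1+ε)·(2+n·w_max)·e`. -/
theorem ratio_bound_asymmetric {J A : Type*} [Fintype J] [DecidableEq J]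
    [Fintype A] [DecidableEq A] [Nonempty A]
    (n : ℕ) (hn : n = Fintype.card A)
    (w : A → ℝ) (hw : ∀ i, 0 < w i) (hwsum : ∑ i, w i = 1)
    (wmax : ℝ) (hwmax : ∀ i, w i ≤ wmax) (hwmax' : ∃ i, w i = wmax)
    (v : A → Finset J → ℝ)
    (hmono : ∀ i, ∀ S T : Finset J, S ⊆ T → v i S ≤ v i T)
    (hsubmod : ∀ i, ∀ S T : Finset J, v i (S ∩ T) + v i (S ∪ T) ≤ v i S + v i T)
    (hv0 : ∀ i, v i ∅ = 0)
    (Abar : Finset A) (hAbar : Abar = univ.filter (fun i => 0 < v i (univ : Finset J)))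
    (hAbarne : Abar.Nonempty)
    (ℓ : A → J) (hℓ : ∀ i ∈ Abar, ∀ j : J, v i {j} ≤ v i {ℓ i})
    (vb : A → Finset J → ℝ) (hvb : ∀ i S, vb i S = v i {ℓ i} + v i S)
    (ε : ℝ) (hε : 0 ≤ ε) (m : ℕ) (hm : 0 < m) (hJm : Fintype.card J ≤ m)
    (ε' : ℝ) (hε' : ε' = (1 + ε) ^ ((m : ℝ)⁻¹) - 1)
    (R : A → Finset J)
    (hRout : ∀ i ∉ Abar, R i = ∅)
    (hRdisj : ∀ i k, i ≠ k → Disjoint (R i) (R k))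
    (hRcover : Abar.biUnion R = (univ : Finset J))
    (hloc : ∀ i ∈ Abar, ∀ k ∈ Abar, i ≠ k → ∀ j ∈ R i,
      (vb i ((R i).erase j) / vb i (R i)) ^ (w i) *
        (vb k (R k ∪ {j}) / vb k (R k)) ^ (w k) ≤ 1 + ε')
    (S : A → Finset J)
    (hSdisj : ∀ i k, i ≠ k → Disjoint (S i) (S k))
    (hScover : Finset.univ.biUnion S = (univ : Finset J))
    (h : A → ℝ) (hh : ∀ i, 0 ≤ h i) (hhsum : ∑ i, h i ≤ (n : ℝ)) :
    (∏ i ∈ univ \ Abar, h i ^ (w i)) *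
      ∏ i ∈ Abar, (v i (S i) / max (v i {ℓ i}) (v i (R i)) + h i) ^ (w i)
        ≤ (1 + ε) * (2 + n * wmax) * Real.exp 1 := by
  classical
  have hvnn : ∀ i (T : Finset J), 0 ≤ v i T := by
    intro i T
    have := hmono i ∅ T (Finset.empty_subset T)
    rwa [hv0 i] at this
  have hwnn : ∀ i, 0 ≤ w i := fun i => (hw i).le
  have hvbnn : ∀ i (T : Finset J), 0 ≤ vb i T := by
    intro i T
    rw [hvb]
    have := hvnn i {ℓ i}
    have := hvnn i T
    linarith
  have hLpos : ∀ i ∈ Abar, 0 < v i {ℓ i} := by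
    intro i hi
    have hiu : 0 < v i (univ : Finset J) := by
      rw [hAbar] at hi
      exact (Finset.mem_filter.mp hi).2
    have hsum := aux_le_sum_singletons (v i) (hsubmod i) (hvnn i) (hv0 i) (univ : Finset J)
    by_contra hcon
    push_neg at hcon
    have hall : ∀ j ∈ (univ : Finset J), v i {j} ≤ 0 := fun j _ => le_trans (hℓ i hi j) hcon
    have := Finset.sum_nonpos hall
    linarith
  have hvbpos : ∀ i ∈ Abar, ∀ T : Finset J, 0 < vb i T := by
    intro i hi T
    rw [hvb]
    have := hvnn i T
    linarith [hLpos i hi]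
  -- owner functions
  have hRcov : ∀ j : J, ∃ i, i ∈ Abar ∧ j ∈ R i := by
    intro j
    have hj : j ∈ Abar.biUnion R := by rw [hRcover]; exact Finset.mem_univ j
    obtain ⟨i, hi, hji⟩ := Finset.mem_biUnion.mp hj
    exact ⟨i, hi, hji⟩
  have hScov : ∀ j : J, ∃ k, j ∈ S k := by
    intro j
    have hj : j ∈ (univ : Finset A).biUnion S := by rw [hScover]; exact Finset.mem_univ j
    obtain ⟨k, _, hjk⟩ := Finset.mem_biUnion.mp hj
    exact ⟨k, hjk⟩
  set r : J → A := fun j => (hRcov j).choose with hrdef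
  have hr : ∀ j, r j ∈ Abar ∧ j ∈ R (r j) := fun j => (hRcov j).choose_spec
  have hrEq : ∀ j i, j ∈ R i → r j = i := by
    intro j i hji
    by_contra hne
    exact Finset.disjoint_left.mp (hRdisj (r j) i hne) (hr j).2 hji
  set s : J → A := fun j => (hScov j).choose with hsdef
  have hs : ∀ j, j ∈ S (s j) := fun j => (hScov j).choose_spec
  have hsEq : ∀ j k, j ∈ S k → s j = k := by
    intro j k hjk
    by_contra hne
    exact Finset.disjoint_left.mp (hSdisj (s j) k hne) (hs j) hjk
  set P : A → ℝ := fun k => ∏ j ∈ S k \ R k, (vb k (R k ∪ {j}) / vb k (R k)) with hPdef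
  set Q : A → ℝ := fun i => ∏ j ∈ R i, (vb i (R i) / vb i ((R i).erase j)) with hQdef
  set g : J → ℝ := fun j => (vb (s j) (R (s j) ∪ {j}) / vb (s j) (R (s j))) ^ w (s j) with hgdef
  set t : J → ℝ := fun j => (vb (r j) (R (r j)) / vb (r j) ((R (r j)).erase j)) ^ w (r j) with htdef
  have hP1 : ∀ k ∈ Abar, 1 ≤ P k := by
    intro k hk
    simp only [hPdef]
    apply aux_one_le_prod
    intro j hj
    have h1 : vb k (R k) ≤ vb k (R k ∪ {j}) := by
      rw [hvb, hvb]
      have := hmono k (R k) (R k ∪ {j}) Finset.subset_union_left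
      linarith
    exact (one_le_div (hvbpos k hk (R k))).mpr h1
  have hP2 : ∀ k ∈ Abar, (v k {ℓ k} + v k (S k)) / vb k (R k) ≤ P k := by
    intro k hk
    have hBpos := hvbpos k hk (R k)
    have hBne : vb k (R k) ≠ 0 := ne_of_gt hBpos
    set c : J → ℝ := fun j => (v k (R k ∪ {j}) - v k (R k)) / vb k (R k) with hcdef
    have hc : ∀ j ∈ S k \ R k, 0 ≤ c j := by
      intro j _
      apply div_nonneg _ hBpos.le
      have := hmono k (R k) (R k ∪ {j}) Finset.subset_union_left
      linarith
    have hW := aux_prod_one_add (S k \ R k) c hc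
    have hPeq : P k = ∏ j ∈ S k \ R k, (1 + c j) := by
      simp only [hPdef, hcdef]
      apply Finset.prod_congr rfl
      intro j _
      have hvbu : vb k (R k ∪ {j}) = vb k (R k) + (v k (R k ∪ {j}) - v k (R k)) := by
        rw [hvb, hvb]; ring
      rw [hvbu, add_div, div_self hBne]
    have hgain := aux_gain (v k) (hsubmod k) (S k \ R k) (R k) Finset.sdiff_disjoint
    rw [Finset.union_sdiff_self_eq_union] at hgain
    have hSk : v k (S k) ≤ v k (R k ∪ S k) := hmono k _ _ Finset.subset_union_right
    have hsumc : ∑ j ∈ S k \ R k, c j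
        = (∑ j ∈ S k \ R k, (v k (R k ∪ {j}) - v k (R k))) / vb k (R k) := by
      simp only [hcdef]
      rw [Finset.sum_div]
    rw [hPeq]
    refine le_trans ?_ hW
    rw [hsumc, div_le_iff₀ hBpos, add_mul, one_mul, div_mul_cancel₀ _ hBne]
    have hBeq : vb k (R k) = v k {ℓ k} + v k (R k) := hvb k (R k)
    linarith
  have hQnn : ∀ i ∈ Abar, 0 ≤ Q i := by
    intro i hi
    apply Finset.prod_nonneg
    intro j _
    exact div_nonneg (hvbpos i hi _).le (hvbpos i hi _).le
  have hQe : ∀ i ∈ Abar, Q i ≤ Real.exp 1 := by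
    intro i hi
    have hqpos : (0:ℝ) < max (v i {ℓ i}) (v i (R i)) :=
      lt_of_lt_of_le (hLpos i hi) (le_max_left _ _)
    have hloss := aux_loss (v i) (hsubmod i) (R i) (R i) (subset_refl _)
    rw [Finset.sdiff_self, hv0 i] at hloss
    have hfac : ∀ j ∈ R i, vb i (R i) / vb i ((R i).erase j)
        ≤ Real.exp ((v i (R i) - v i ((R i).erase j)) / max (v i {ℓ i}) (v i (R i))) := by
      intro j hj
      have hEpos := hvbpos i hi ((R i).erase j)
      have hEne : vb i ((R i).erase j) ≠ 0 := ne_of_gt hEpos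
      have hdnn : 0 ≤ v i (R i) - v i ((R i).erase j) := by
        have := hmono i ((R i).erase j) (R i) (Finset.erase_subset j (R i))
        linarith
      have hdL : v i (R i) - v i ((R i).erase j) ≤ v i {ℓ i} := by
        have hx := aux_exchange (v i) (hsubmod i)
          (Finset.empty_subset ((R i).erase j)) (Finset.notMem_erase j (R i))
        rw [Finset.insert_erase hj] at hx
        have h1 : insert j (∅ : Finset J) = {j} := rfl
        rw [h1, hv0 i] at hx
        have := hℓ i hi j
        linarith
      have hEq : max (v i {ℓ i}) (v i (R i)) ≤ vb i ((R i).erase j) := by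
        rw [hvb]
        apply max_le
        · linarith [hvnn i ((R i).erase j)]
        · linarith
      have hratio : vb i (R i) / vb i ((R i).erase j)
          = 1 + (v i (R i) - v i ((R i).erase j)) / vb i ((R i).erase j) := by
        have hvbu : vb i (R i) = vb i ((R i).erase j) + (v i (R i) - v i ((R i).erase j)) := by
          rw [hvb, hvb]; ring
        rw [hvbu, add_div, div_self hEne]
      rw [hratio]
      have hmono2 : (v i (R i) - v i ((R i).erase j)) / vb i ((R i).erase j)
          ≤ (v i (R i) - v i ((R i).erase j)) / max (v i {ℓ i}) (v i (R i)) := by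
        gcongr
      have hexp := Real.add_one_le_exp
        ((v i (R i) - v i ((R i).erase j)) / max (v i {ℓ i}) (v i (R i)))
      linarith
    calc Q i ≤ ∏ j ∈ R i, Real.exp ((v i (R i) - v i ((R i).erase j)) / max (v i {ℓ i}) (v i (R i))) := by
          simp only [hQdef]
          exact Finset.prod_le_prod
            (fun j _ => div_nonneg (hvbpos i hi _).le (hvbpos i hi _).le) hfac
      _ = Real.exp (∑ j ∈ R i, (v i (R i) - v i ((R i).erase j)) / max (v i {ℓ i}) (v i (R i))) := by
          rw [← Real.exp_sum]
      _ ≤ Real.exp 1 := by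
          rw [Real.exp_le_exp, ← Finset.sum_div, div_le_one hqpos]
          have := le_max_right (v i {ℓ i}) (v i (R i))
          linarith
  have ht1 : ∀ j : J, 1 ≤ t j := by
    intro j
    have hi := (hr j).1
    have hratio : 1 ≤ vb (r j) (R (r j)) / vb (r j) ((R (r j)).erase j) := by
      rw [le_div_iff₀ (hvbpos _ hi _), one_mul, hvb, hvb]
      have := hmono (r j) ((R (r j)).erase j) (R (r j)) (Finset.erase_subset j _)
      linarith
    simp only [htdef]
    rw [← Real.one_rpow (w (r j))]
    exact Real.rpow_le_rpow zero_le_one hratio (hwnn _)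
  have hPQ : ∏ k ∈ Abar, P k ^ w k ≤ (1 + ε) * ∏ i ∈ Abar, Q i ^ w i := by
    have hdisjSR : (↑Abar : Set A).PairwiseDisjoint (fun k => S k \ R k) := by
      intro a _ b _ hab
      exact Finset.disjoint_of_subset_left Finset.sdiff_subset
        (Finset.disjoint_of_subset_right Finset.sdiff_subset (hSdisj a b hab))
    have hdisjR : (↑Abar : Set A).PairwiseDisjoint R := by
      intro a _ b _ hab
      exact hRdisj a b hab
    have hLHS : ∏ k ∈ Abar, P k ^ w k = ∏ j ∈ Abar.biUnion (fun k => S k \ R k), g j := by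
      rw [Finset.prod_biUnion hdisjSR]
      apply Finset.prod_congr rfl
      intro k hk
      simp only [hPdef]
      rw [← Real.finset_prod_rpow _ _ (fun j _ => div_nonneg (hvbnn k _) (hvbnn k _)) (w k)]
      apply Finset.prod_congr rfl
      intro j hj
      simp only [hgdef]
      rw [hsEq j k (Finset.mem_sdiff.mp hj).1]
    have h1e' : (1:ℝ) ≤ 1 + ε' := by
      have h0 : (1+ε) ^ (0:ℝ) ≤ (1 + ε) ^ ((m:ℝ)⁻¹) :=
        Real.rpow_le_rpow_of_exponent_le (by linarith) (by positivity)
      rw [Real.rpow_zero] at h0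
      rw [hε']
      linarith
    have hpow : (1 + ε') ^ m = 1 + ε := by
      have he : 1 + ε' = (1 + ε) ^ ((m:ℝ)⁻¹) := by rw [hε']; ring
      rw [he, ← Real.rpow_natCast ((1+ε) ^ ((m:ℝ)⁻¹)) m, ← Real.rpow_mul (by linarith),
        inv_mul_cancel₀ (Nat.cast_ne_zero.mpr hm.ne'), Real.rpow_one]
    have htnn : ∀ j : J, 0 ≤ t j := fun j => le_trans zero_le_one (ht1 j)
    have hRHSprod : ∏ j ∈ (univ : Finset J), t j = ∏ i ∈ Abar, Q i ^ w i := by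
      rw [← hRcover, Finset.prod_biUnion hdisjR]
      apply Finset.prod_congr rfl
      intro i hi
      simp only [hQdef]
      rw [← Real.finset_prod_rpow _ _ (fun j _ => div_nonneg (hvbnn i _) (hvbnn i _)) (w i)]
      apply Finset.prod_congr rfl
      intro j hj
      simp only [htdef]
      rw [hrEq j i hj]
    have hitem : ∀ j ∈ Abar.biUnion (fun k => S k \ R k), g j ≤ (1 + ε') * t j := by
      intro j hj
      obtain ⟨k, hk, hjk⟩ := Finset.mem_biUnion.mp hj
      obtain ⟨hjS, hjR⟩ := Finset.mem_sdiff.mp hjk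
      have hsj : s j = k := hsEq j k hjS
      have hiA := (hr j).1
      have hjRi := (hr j).2
      have hik : r j ≠ k := by
        intro heq
        rw [heq] at hjRi
        exact hjR hjRi
      have hl := hloc (r j) hiA k hk hik j hjRi
      have hEpos : 0 < vb (r j) ((R (r j)).erase j) := hvbpos _ hiA _
      have hRpos : 0 < vb (r j) (R (r j)) := hvbpos _ hiA _
      have hYpos : 0 < (vb (r j) ((R (r j)).erase j) / vb (r j) (R (r j))) ^ w (r j) :=
        Real.rpow_pos_of_pos (div_pos hEpos hRpos) _
      simp only [hgdef, htdef]
      rw [hsj]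
      have hinv : (vb (r j) (R (r j)) / vb (r j) ((R (r j)).erase j)) ^ w (r j)
          = ((vb (r j) ((R (r j)).erase j) / vb (r j) (R (r j))) ^ w (r j))⁻¹ := by
        rw [← Real.inv_rpow (div_nonneg hEpos.le hRpos.le), inv_div]
      rw [hinv, ← div_eq_mul_inv, le_div_iff₀ hYpos, mul_comm]
      exact hl
    have hcard : (Abar.biUnion (fun k => S k \ R k)).card ≤ m :=
      le_trans (le_trans (Finset.card_le_card (Finset.subset_univ _)) (le_of_eq Finset.card_univ)) hJm
    calc ∏ k ∈ Abar, P k ^ w k = ∏ j ∈ Abar.biUnion (fun k => S k \ R k), g j := hLHS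
      _ ≤ ∏ j ∈ Abar.biUnion (fun k => S k \ R k), ((1 + ε') * t j) := by
          apply Finset.prod_le_prod
          · intro j _
            exact Real.rpow_nonneg (div_nonneg (hvbnn _ _) (hvbnn _ _)) _
          · exact hitem
      _ = (1 + ε') ^ (Abar.biUnion (fun k => S k \ R k)).card
            * ∏ j ∈ Abar.biUnion (fun k => S k \ R k), t j := by
          rw [Finset.prod_mul_distrib, Finset.prod_const]
      _ ≤ (1 + ε') ^ m * ∏ j ∈ (univ : Finset J), t j := by
          apply mul_le_mul
          · exact pow_le_pow_right₀ h1e' hcard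
          · exact aux_prod_subset _ _ (Finset.subset_univ _) t
              (fun j _ => htnn j) (fun j _ _ => ht1 j)
          · exact Finset.prod_nonneg (fun j _ => htnn j)
          · exact pow_nonneg (by linarith) m
      _ = (1 + ε) * ∏ i ∈ Abar, Q i ^ w i := by rw [hpow, hRHSprod]
  have hQprod : ∏ i ∈ Abar, Q i ^ w i ≤ Real.exp 1 := by
    calc ∏ i ∈ Abar, Q i ^ w i ≤ ∏ i ∈ Abar, Real.exp 1 ^ w i := by
          apply Finset.prod_le_prod
          · intro i hi
            exact Real.rpow_nonneg (hQnn i hi) _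
          · intro i hi
            exact Real.rpow_le_rpow (hQnn i hi) (hQe i hi) (hwnn i)
      _ = Real.exp (∑ i ∈ Abar, w i) := by
          simp_rw [Real.exp_one_rpow]
          rw [← Real.exp_sum]
      _ ≤ Real.exp 1 := by
          rw [Real.exp_le_exp]
          calc ∑ i ∈ Abar, w i ≤ ∑ i ∈ (univ : Finset A), w i :=
                Finset.sum_le_sum_of_subset_of_nonneg (Finset.subset_univ _) (fun i _ _ => hwnn i)
            _ = 1 := hwsum
  have hwmaxnn : (0:ℝ) ≤ wmax := le_trans (hwnn (Classical.arbitrary A)) (hwmax _)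
  have hAM : ∏ i ∈ (univ : Finset A), (2 + h i) ^ w i ≤ 2 + (n : ℝ) * wmax := by
    have hge := Real.geom_mean_le_arith_mean_weighted univ w (fun i => 2 + h i)
      (fun i _ => hwnn i) hwsum (fun i _ => by show (0:ℝ) ≤ 2 + h i; linarith [hh i])
    refine le_trans hge ?_
    have e1 : ∑ i : A, w i * (2 + h i) = (∑ i : A, w i) * 2 + ∑ i : A, w i * h i := by
      rw [Finset.sum_mul, ← Finset.sum_add_distrib]
      apply Finset.sum_congr rfl
      intro i _
      ring
    have e2 : ∑ i : A, w i * h i ≤ wmax * ∑ i : A, h i := by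
      rw [Finset.mul_sum]
      apply Finset.sum_le_sum
      intro i _
      exact mul_le_mul_of_nonneg_right (hwmax i) (hh i)
    have e3 : wmax * ∑ i : A, h i ≤ wmax * n := mul_le_mul_of_nonneg_left hhsum hwmaxnn
    rw [e1, hwsum]
    linarith
  -- final assembly
  have hxnn : ∀ k, 0 ≤ v k (S k) / max (v k {ℓ k}) (v k (R k)) + h k := fun k =>
    add_nonneg (div_nonneg (hvnn k _) (le_trans (hvnn k (R k)) (le_max_right _ _))) (hh k)
  have hstepA : ∀ k ∈ Abar, v k (S k) / max (v k {ℓ k}) (v k (R k)) + h k ≤ (2 + h k) * P k := by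
    intro k hk
    have hB := hvbpos k hk (R k)
    have hq : (0:ℝ) < max (v k {ℓ k}) (v k (R k)) :=
      lt_of_lt_of_le (hLpos k hk) (le_max_left _ _)
    have hPnn : (0:ℝ) ≤ P k := le_trans zero_le_one (hP1 k hk)
    have hB2q : vb k (R k) ≤ 2 * max (v k {ℓ k}) (v k (R k)) := by
      rw [hvb]
      have h1 := le_max_left (v k {ℓ k}) (v k (R k))
      have h2 := le_max_right (v k {ℓ k}) (v k (R k))
      linarith
    have h2 : v k {ℓ k} + v k (S k) ≤ P k * vb k (R k) := (div_le_iff₀ hB).mp (hP2 k hk)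
    have h3 : P k * vb k (R k) ≤ P k * (2 * max (v k {ℓ k}) (v k (R k))) :=
      mul_le_mul_of_nonneg_left hB2q hPnn
    have h4 : v k (S k) / max (v k {ℓ k}) (v k (R k)) ≤ 2 * P k := by
      rw [div_le_iff₀ hq]
      nlinarith [hLpos k hk]
    have h5 : h k ≤ h k * P k := le_mul_of_one_le_right (hh k) (hP1 k hk)
    nlinarith
  have hfinal1 : ∏ k ∈ Abar, (v k (S k) / max (v k {ℓ k}) (v k (R k)) + h k) ^ w k
      ≤ (∏ k ∈ Abar, (2 + h k) ^ w k) * ∏ k ∈ Abar, P k ^ w k := by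
    rw [← Finset.prod_mul_distrib]
    apply Finset.prod_le_prod
    · intro k _
      exact Real.rpow_nonneg (hxnn k) _
    · intro k hk
      rw [← Real.mul_rpow (by linarith [hh k]) (le_trans zero_le_one (hP1 k hk))]
      exact Real.rpow_le_rpow (hxnn k) (hstepA k hk) (hwnn k)
  have hfinal2 : ∏ i ∈ univ \ Abar, h i ^ w i ≤ ∏ i ∈ univ \ Abar, (2 + h i) ^ w i :=
    Finset.prod_le_prod (fun i _ => Real.rpow_nonneg (hh i) _)
      (fun i _ => Real.rpow_le_rpow (hh i) (by linarith [hh i]) (hwnn i))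
  have hsplit : (∏ i ∈ univ \ Abar, (2 + h i) ^ w i) * ∏ i ∈ Abar, (2 + h i) ^ w i
      = ∏ i ∈ (univ : Finset A), (2 + h i) ^ w i :=
    Finset.prod_sdiff (Finset.subset_univ Abar)
  have hPprod_nn : 0 ≤ ∏ k ∈ Abar, P k ^ w k :=
    Finset.prod_nonneg (fun k hk => Real.rpow_nonneg (le_trans zero_le_one (hP1 k hk)) _)
  have h2hnn : ∀ (s' : Finset A), 0 ≤ ∏ i ∈ s', (2 + h i) ^ w i :=
    fun s' => Finset.prod_nonneg (fun i _ => Real.rpow_nonneg (by linarith [hh i]) _)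
  have hPe : ∏ k ∈ Abar, P k ^ w k ≤ (1 + ε) * Real.exp 1 :=
    le_trans hPQ (mul_le_mul_of_nonneg_left hQprod (by linarith))
  have hnwnn : (0:ℝ) ≤ (n:ℝ) * wmax := mul_nonneg (Nat.cast_nonneg n) hwmaxnn
  calc (∏ i ∈ univ \ Abar, h i ^ w i)
        * ∏ i ∈ Abar, (v i (S i) / max (v i {ℓ i}) (v i (R i)) + h i) ^ w i
      ≤ (∏ i ∈ univ \ Abar, (2 + h i) ^ w i)
        * ((∏ k ∈ Abar, (2 + h k) ^ w k) * ∏ k ∈ Abar, P k ^ w k) := by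
        apply mul_le_mul hfinal2 hfinal1 ?_ (h2hnn _)
        exact Finset.prod_nonneg (fun i _ => Real.rpow_nonneg (hxnn i) _)
    _ = (∏ i ∈ (univ : Finset A), (2 + h i) ^ w i) * ∏ k ∈ Abar, P k ^ w k := by
        rw [← mul_assoc, hsplit]
    _ ≤ (2 + (n:ℝ) * wmax) * ((1 + ε) * Real.exp 1) := by
        apply mul_le_mul hAM hPe hPprod_nn
        linarith
    _ = (1 + ε) * (2 + (n:ℝ) * wmax) * Real.exp 1 := by ring
end

section
/- (Bounded spending, symmetric case) Let R = (R_i)_{i∈Ā} be an ε̄-local optimum (with equal weights 1/n) with respect to the endowed valuations v̄_i, with prices p_j as defined. Then p(R_i) ≤ 1 for every agent i ∈ Ā, and consequently p(J) ≤ |Ā|. -/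
/-!
With `L := v_i(ℓ(i))`, the price of `j ∈ R_i` is `(v(R_i) - v(R_i ∖ j)) / (L + v(R_i ∖ j))`.
Subadditivity and the choice of `ℓ(i)` give `L + v(R_i ∖ j) ≥ v(R_i)`, so `p_j · v(R_i)` is at most
the marginal value of `j` in `R_i`, and by submodularity these marginal values sum to at most
`v(R_i)`. Summing over the disjoint bundles gives `p(J) ≤ |Ā|`.
-/

open Finset

theorem div_sub_one_mul_le {L x y : ℝ} (hx : 0 ≤ x) (hxy : x ≤ y) (hy : y ≤ L + x) :
    ((L + y) / (L + x) - 1) * y ≤ y - x := by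
  rcases (show 0 ≤ L + x by linarith).eq_or_lt with hzero | hpos
  · have hy0 : y = 0 := by linarith
    rw [hy0, mul_zero]
    linarith
  · rw [div_sub_one hpos.ne', div_mul_eq_mul_div, div_le_iff₀ hpos]
    nlinarith

section Submodular

variable {J : Type*} [DecidableEq J] {v : Finset J → ℝ}

theorem sub_erase_le_sub_erase_of_submodular
    (hsub : ∀ S T : Finset J, v (S ∩ T) + v (S ∪ T) ≤ v S + v T)
    {S T : Finset J} {j : J} (hj : j ∈ S) (hST : S ⊆ T) :
    v T - v (T.erase j) ≤ v S - v (S.erase j) := by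
  have h := hsub (T.erase j) S
  rw [erase_inter, inter_eq_right.mpr hST,
    show T.erase j ∪ S = T by rw [erase_union_of_mem hj, union_eq_left.mpr hST]] at h
  linarith

theorem sum_sub_erase_le_of_submodular
    (hsub : ∀ S T : Finset J, v (S ∩ T) + v (S ∪ T) ≤ v S + v T) (S : Finset J) :
    ∑ j ∈ S, (v S - v (S.erase j)) ≤ v S - v ∅ := by
  induction S using Finset.induction_on with
  | empty => simp
  | insert a T ha ih =>
    rw [sum_insert ha, erase_insert ha]
    have hdiminishing : ∑ j ∈ T, (v (insert a T) - v ((insert a T).erase j)) ≤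
        ∑ j ∈ T, (v T - v (T.erase j)) :=
      sum_le_sum fun j hj => sub_erase_le_sub_erase_of_submodular hsub hj (subset_insert a T)
    linarith

theorem le_singleton_add_erase_of_submodular
    (hsub : ∀ S T : Finset J, v (S ∩ T) + v (S ∪ T) ≤ v S + v T) (h0 : v ∅ = 0)
    {S : Finset J} {j : J} (hj : j ∈ S) :
    v S ≤ v {j} + v (S.erase j) := by
  have h := hsub {j} (S.erase j)
  rw [singleton_inter_of_notMem (notMem_erase j S), ← insert_eq, insert_erase hj, h0] at h
  linarith

theorem sum_endowed_price_le_one (hmono : ∀ S T : Finset J, S ⊆ T → v S ≤ v T)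
    (hsub : ∀ S T : Finset J, v (S ∩ T) + v (S ∪ T) ≤ v S + v T) (h0 : v ∅ = 0)
    {L : ℝ} {S : Finset J} (hL : ∀ j ∈ S, v {j} ≤ L) :
    ∑ j ∈ S, ((L + v S) / (L + v (S.erase j)) - 1) ≤ 1 := by
  have hnonneg : ∀ T, 0 ≤ v T := fun T => h0 ▸ hmono ∅ T (empty_subset T)
  rcases (hnonneg S).eq_or_lt with hS | hS
  · have herase : ∀ j ∈ S, v (S.erase j) = v S := fun j _ =>
      le_antisymm (hmono _ _ (erase_subset j S)) (hS ▸ hnonneg _)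
    calc ∑ j ∈ S, ((L + v S) / (L + v (S.erase j)) - 1)
        ≤ ∑ _j ∈ S, (0 : ℝ) := sum_le_sum fun j hj => by
          rw [herase j hj, sub_nonpos]; exact div_self_le_one _
      _ ≤ 1 := by simp
  · have hprice : ∀ j ∈ S,
        ((L + v S) / (L + v (S.erase j)) - 1) * v S ≤ v S - v (S.erase j) := fun j hj =>
      div_sub_one_mul_le (hnonneg _) (hmono _ _ (erase_subset j S))
        ((le_singleton_add_erase_of_submodular hsub h0 hj).trans (by linarith [hL j hj]))
    rw [← mul_le_mul_iff_of_pos_right hS, one_mul, sum_mul]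
    calc _ ≤ ∑ j ∈ S, (v S - v (S.erase j)) := sum_le_sum hprice
      _ ≤ v S := by linarith [sum_sub_erase_le_of_submodular hsub S]

end Submodular

theorem bounded_spending_symmetric_general {J A : Type*} [Fintype J] [DecidableEq J]
    [Fintype A]
    (v : A → Finset J → ℝ)
    (hmono : ∀ i, ∀ S T : Finset J, S ⊆ T → v i S ≤ v i T)
    (hsubmod : ∀ i, ∀ S T : Finset J, v i (S ∩ T) + v i (S ∪ T) ≤ v i S + v i T)
    (hv0 : ∀ i, v i ∅ = 0)
    (ℓ : A → J) (hℓ : ∀ i, ∀ j : J, v i {j} ≤ v i {ℓ i})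
    (vb : A → Finset J → ℝ) (hvb : ∀ i S, vb i S = v i {ℓ i} + v i S)
    (R : A → Finset J)
    (hdisj : ∀ i k, i ≠ k → Disjoint (R i) (R k))
    (owner : J → A) (howner : ∀ j : J, j ∈ R (owner j))
    (p : J → ℝ)
    (hp : ∀ j : J, p j =
      vb (owner j) (R (owner j)) / vb (owner j) ((R (owner j)).erase j) - 1) :
    (∀ i : A, ∑ j ∈ R i, p j ≤ 1) ∧ ∑ j : J, p j ≤ (Fintype.card A : ℝ) := by
  have howner_eq : ∀ i, ∀ j ∈ R i, owner j = i := fun i j hj => by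
    by_contra h
    exact disjoint_left.mp (hdisj _ _ h) (howner j) hj
  have hbundle : ∀ i, ∑ j ∈ R i, p j ≤ 1 := fun i => by
    rw [sum_congr rfl fun j hj => by rw [hp, howner_eq i j hj, hvb, hvb]]
    exact sum_endowed_price_le_one (hmono i) (hsubmod i) (hv0 i) fun j _ => hℓ i j
  refine ⟨hbundle, ?_⟩
  have hcover : (univ : Finset A).biUnion R = univ :=
    eq_univ_of_forall fun j => mem_biUnion.mpr ⟨owner j, mem_univ _, howner j⟩
  calc ∑ j, p j = ∑ i, ∑ j ∈ R i, p j := by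
        rw [← hcover, sum_biUnion fun i _ k _ hik => hdisj i k hik]
    _ ≤ ∑ _i : A, 1 := sum_le_sum fun i _ => hbundle i
    _ = Fintype.card A := by simp

/-- (Bounded spending, symmetric case.)
For an `ε̄`-local optimum `R` (with equal weights `1/n`) with prices `p`,
`p(R_i) ≤ 1` for every agent `i`, and consequently `p(J) ≤ |Ā|`. -/
theorem bounded_spending_symmetric {J A : Type*} [Fintype J] [DecidableEq J]
    [Fintype A] [Nonempty A]
    (n : ℕ) (hn1 : 1 ≤ n) (hAn : Fintype.card A ≤ n)
    (v : A → Finset J → ℝ)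
    (hmono : ∀ i, ∀ S T : Finset J, S ⊆ T → v i S ≤ v i T)
    (hsubmod : ∀ i, ∀ S T : Finset J, v i (S ∩ T) + v i (S ∪ T) ≤ v i S + v i T)
    (hv0 : ∀ i, v i ∅ = 0) (hvJ : ∀ i, 0 < v i (univ : Finset J))
    (ℓ : A → J) (hℓ : ∀ i, ∀ j : J, v i {j} ≤ v i {ℓ i})
    (vb : A → Finset J → ℝ) (hvb : ∀ i S, vb i S = v i {ℓ i} + v i S)
    (R : A → Finset J)
    (hdisj : ∀ i k, i ≠ k → Disjoint (R i) (R k))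
    (owner : J → A) (howner : ∀ j : J, j ∈ R (owner j))
    (ε' : ℝ) (hε' : 0 ≤ ε')
    (hloc : ∀ i k, i ≠ k → ∀ j ∈ R i,
      (vb i ((R i).erase j) / vb i (R i)) *
        (vb k (R k ∪ {j}) / vb k (R k)) ≤ (1 + ε') ^ n)
    (p : J → ℝ)
    (hp : ∀ j : J, p j =
      vb (owner j) (R (owner j)) / vb (owner j) ((R (owner j)).erase j) - 1) :
    (∀ i : A, ∑ j ∈ R i, p j ≤ 1) ∧ ∑ j : J, p j ≤ (Fintype.card A : ℝ) :=
  bounded_spending_symmetric_general v hmono hsubmod hv0 ℓ hℓ vb hvb R hdisj owner howner p hp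
end

section
/- Let R = (R_i)_{i∈Ā} be an ε̄-local optimum (with equal weights 1/n) with respect to the endowed valuations v̄_i, with prices p_j as defined and ε̂ := (1+ε̄)^n − 1. Then for every agent i ∈ Ā and every set S ⊆ J, v_i(S) / max{ v_i(R_i), v_i(ℓ(i)) } ≤ 1 + 2·Σ_{j∈S} (2ε̂ + p_j). -/
open Finset

private lemma marg_dec {J : Type*} [DecidableEq J] (v : Finset J → ℝ)
    (hmono : ∀ S T : Finset J, S ⊆ T → v S ≤ v T)
    (hsubmod : ∀ S T : Finset J, v (S ∩ T) + v (S ∪ T) ≤ v S + v T)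
    {R R' : Finset J} (hRR' : R ⊆ R') (j : J) :
    v (insert j R') - v R' ≤ v (insert j R) - v R := by
  by_cases hj : j ∈ R'
  · rw [Finset.insert_eq_self.mpr hj]
    have := hmono R (insert j R) (Finset.subset_insert _ _)
    linarith
  · have h1 : (insert j R) ∩ R' = R := by
      ext x
      simp only [Finset.mem_inter, Finset.mem_insert]
      constructor
      · rintro ⟨hx1 | hx1, hx2⟩
        · exact absurd (hx1 ▸ hx2) hj
        · exact hx1
      · exact fun hx => ⟨Or.inr hx, hRR' hx⟩
    have h2 : (insert j R) ∪ R' = insert j R' := by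
      ext x
      simp only [Finset.mem_union, Finset.mem_insert]
      constructor
      · rintro (⟨h | h⟩ | h)
        · exact Or.inl h
        · exact Or.inr (hRR' h)
        · exact Or.inr h
      · rintro (h | h)
        · exact Or.inl (Or.inl h)
        · exact Or.inr h
    have := hsubmod (insert j R) R'
    rw [h1, h2] at this
    linarith

private lemma sum_marg {J : Type*} [DecidableEq J] (v : Finset J → ℝ)
    (hmono : ∀ S T : Finset J, S ⊆ T → v S ≤ v T)
    (hsubmod : ∀ S T : Finset J, v (S ∩ T) + v (S ∪ T) ≤ v S + v T)
    (R : Finset J) (T : Finset J) :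
    v (R ∪ T) ≤ v R + ∑ j ∈ T, (v (insert j R) - v R) := by
  induction T using Finset.induction_on with
  | empty => simp
  | @insert a T ha ih =>
    have h1 : R ∪ insert a T = insert a (R ∪ T) := by
      ext x
      simp only [Finset.mem_union, Finset.mem_insert]
      tauto
    have h2 := marg_dec v hmono hsubmod (Finset.subset_union_left (s₁ := R) (s₂ := T)) a
    rw [h1, Finset.sum_insert ha]
    linarith

/-- (Price bound for arbitrary sets, symmetric case.)
For an `ε̄`-local optimum `R` (with equal weights `1/n`) with prices `p` and
`ε̂ := (1+ε̄)^n − 1`, for every agent `i` and every `S ⊆ J`,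
`v_i(S) / max{v_i(R_i), v_i(ℓ(i))} ≤ 1 + 2·Σ_{j∈S} (2ε̂ + p_j)`. -/
theorem symmetric_price_bound {J A : Type*} [Fintype J] [DecidableEq J]
    [Fintype A] [Nonempty A]
    (n : ℕ) (hn1 : 1 ≤ n) (hAn : Fintype.card A ≤ n)
    (v : A → Finset J → ℝ)
    (hmono : ∀ i, ∀ S T : Finset J, S ⊆ T → v i S ≤ v i T)
    (hsubmod : ∀ i, ∀ S T : Finset J, v i (S ∩ T) + v i (S ∪ T) ≤ v i S + v i T)
    (hv0 : ∀ i, v i ∅ = 0) (hvJ : ∀ i, 0 < v i (univ : Finset J))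
    (ℓ : A → J) (hℓ : ∀ i, ∀ j : J, v i {j} ≤ v i {ℓ i})
    (vb : A → Finset J → ℝ) (hvb : ∀ i S, vb i S = v i {ℓ i} + v i S)
    (R : A → Finset J)
    (hdisj : ∀ i k, i ≠ k → Disjoint (R i) (R k))
    (owner : J → A) (howner : ∀ j : J, j ∈ R (owner j))
    (ε' : ℝ) (hε' : 0 ≤ ε')
    (hloc : ∀ i k, i ≠ k → ∀ j ∈ R i,
      (vb i ((R i).erase j) / vb i (R i)) *
        (vb k (R k ∪ {j}) / vb k (R k)) ≤ (1 + ε') ^ n)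
    (p : J → ℝ)
    (hp : ∀ j : J, p j =
      vb (owner j) (R (owner j)) / vb (owner j) ((R (owner j)).erase j) - 1)
    (ε'' : ℝ) (hε'' : ε'' = (1 + ε') ^ n - 1) :
    ∀ (i : A) (S : Finset J),
      v i S / max (v i (R i)) (v i {ℓ i}) ≤ 1 + 2 * ∑ j ∈ S, (2 * ε'' + p j) := by
  -- every agent's best singleton has positive value
  have hℓpos : ∀ k : A, 0 < v k {ℓ k} := by
    intro k
    have h := sum_marg (v k) (hmono k) (hsubmod k) ∅ (univ : Finset J)
    rw [Finset.empty_union, hv0 k] at h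
    have h' : v k univ ≤ ∑ j : J, v k {j} := by
      refine le_trans h (le_of_eq ?_)
      rw [zero_add]
      apply Finset.sum_congr rfl
      intro j _
      have hje : insert j (∅ : Finset J) = {j} := by ext x; simp
      rw [hje]
      ring
    have h2 : (0:ℝ) < ∑ j : J, v k {j} := lt_of_lt_of_le (hvJ k) h'
    by_contra hcon
    push_neg at hcon
    have : ∑ j : J, v k {j} ≤ 0 := by
      apply Finset.sum_nonpos
      intro j _
      exact le_trans (hℓ k j) hcon
    linarith
  have hvnn : ∀ (k : A) (X : Finset J), 0 ≤ v k X := by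
    intro k X
    have := hmono k ∅ X (Finset.empty_subset X)
    rw [hv0 k] at this; exact this
  have hvbpos : ∀ (k : A) (X : Finset J), 0 < vb k X := by
    intro k X
    rw [hvb]
    have := hvnn k X
    have := hℓpos k
    linarith
  have hpow : (1:ℝ) ≤ (1 + ε') ^ n := one_le_pow₀ (by linarith)
  have hε2 : 0 ≤ ε'' := by rw [hε'']; linarith
  -- prices are nonnegative
  have hppos : ∀ j : J, 0 ≤ p j := by
    intro j
    rw [hp j]
    have ha : 0 < vb (owner j) ((R (owner j)).erase j) := hvbpos _ _
    have hab : vb (owner j) ((R (owner j)).erase j) ≤ vb (owner j) (R (owner j)) := by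
      rw [hvb, hvb]
      have := hmono (owner j) ((R (owner j)).erase j) (R (owner j)) (Finset.erase_subset _ _)
      linarith
    have := (one_le_div ha).mpr hab
    linarith
  intro i S
  set M := max (v i (R i)) (v i {ℓ i}) with hM
  have hMpos : 0 < M := lt_of_lt_of_le (hℓpos i) (le_max_right _ _)
  have hM1 : v i (R i) ≤ M := le_max_left _ _
  have hM2 : v i {ℓ i} ≤ M := le_max_right _ _
  -- per-item marginal bound
  have hitem : ∀ j ∈ S, v i (insert j (R i)) - v i (R i) ≤ 2 * M * (2 * ε'' + p j) := by
    intro j _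
    have hpj0 : 0 ≤ p j := hppos j
    have hrhs0 : 0 ≤ 2 * M * (2 * ε'' + p j) := by
      apply mul_nonneg (by linarith)
      linarith
    by_cases hjR : j ∈ R i
    · rw [Finset.insert_eq_self.mpr hjR]
      linarith
    · -- owner of j is not i
      have hki : owner j ≠ i := fun h => hjR (h ▸ howner j)
      set k := owner j with hk
      have hlocal := hloc k i hki j (howner j)
      set a := vb k ((R k).erase j) with hadef
      set b := vb k (R k) with hbdef
      have hRiU : R i ∪ {j} = insert j (R i) := by
        ext x
        simp only [Finset.mem_union, Finset.mem_insert, Finset.mem_singleton]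
        tauto
      rw [hRiU] at hlocal
      set c := vb i (insert j (R i)) with hcdef
      set d := vb i (R i) with hddef
      have ha : 0 < a := hvbpos _ _
      have hb : 0 < b := hvbpos _ _
      have hc : 0 < c := hvbpos _ _
      have hd : 0 < d := hvbpos _ _
      have hpj : p j = b / a - 1 := hp j
      have hba : 1 + p j = b / a := by rw [hpj]; ring
      -- from local optimality: c ≤ (1+ε'')(1+p j) d
      have hcle : c ≤ (1 + ε'') * (1 + p j) * d := by
        have h2 : (b / a) * ((a / b) * (c / d)) ≤ (b / a) * ((1 + ε') ^ n) := by
          apply mul_le_mul_of_nonneg_left hlocal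
          positivity
        have h3 : (b / a) * ((a / b) * (c / d)) = c / d := by
          field_simp
        have h1 : c / d ≤ (b / a) * ((1 + ε') ^ n) := by rw [← h3]; exact h2
        have h4 := (div_le_iff₀ hd).mp h1
        rw [hba, hε'']
        calc c ≤ b / a * (1 + ε') ^ n * d := h4
          _ = (1 + ((1 + ε') ^ n - 1)) * (b / a) * d := by ring
      have hcd : c - d = v i (insert j (R i)) - v i (R i) := by
        rw [hcdef, hddef, hvb, hvb]; ring
      have hd2M : d ≤ 2 * M := by
        rw [hddef, hvb]; linarith
      by_cases hcase : 2 * ε'' + p j < 1 / 2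
      · -- small case: use the multiplicative bound
        have hpj1 : p j ≤ 1 := by linarith
        have hstep : c - d ≤ (2 * ε'' + p j) * d := by
          have hmul : ε'' * p j ≤ ε'' := by nlinarith
          nlinarith [hcle]
        calc v i (insert j (R i)) - v i (R i) = c - d := hcd.symm
          _ ≤ (2 * ε'' + p j) * d := hstep
          _ ≤ 2 * M * (2 * ε'' + p j) := by nlinarith
      · -- large case: marginal is at most M ≤ 2M(2ε''+p j)
        push_neg at hcase
        have hmarg : v i (insert j (R i)) - v i (R i) ≤ v i {ℓ i} := by
          have hsm := hsubmod i {j} (R i)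
          have hint : ({j} : Finset J) ∩ R i = ∅ := by
            ext x
            simp only [Finset.mem_inter, Finset.mem_singleton, Finset.notMem_empty,
              iff_false, not_and]
            rintro rfl; exact hjR
          have hun : ({j} : Finset J) ∪ R i = insert j (R i) := by
            ext x
            simp only [Finset.mem_union, Finset.mem_insert, Finset.mem_singleton]
          rw [hint, hun, hv0 i] at hsm
          have := hℓ i j
          linarith
        have : M ≤ 2 * M * (2 * ε'' + p j) := by nlinarith
        linarith
  -- sum up
  have hsum := sum_marg (v i) (hmono i) (hsubmod i) (R i) S
  have hsum2 : ∑ j ∈ S, (v i (insert j (R i)) - v i (R i)) ≤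
      ∑ j ∈ S, 2 * M * (2 * ε'' + p j) := Finset.sum_le_sum hitem
  have hsum3 : ∑ j ∈ S, 2 * M * (2 * ε'' + p j) = 2 * M * ∑ j ∈ S, (2 * ε'' + p j) := by
    rw [Finset.mul_sum]
  have hvS : v i S ≤ v i (R i ∪ S) := hmono i S (R i ∪ S) Finset.subset_union_right
  set Q := ∑ j ∈ S, (2 * ε'' + p j) with hQ
  have hfin : v i S ≤ M + 2 * M * Q := by
    rw [hsum3] at hsum2
    linarith
  rw [div_le_iff₀ hMpos]
  nlinarith [hfin]
end

section
/- Let ε̄ ≥ 0, let m be a positive integer with m ≥ n and |J| ≤ m, and set ε := (1+ε̄)^m − 1. Let R = (R_i)_{i∈Ā} be an ε̄-local optimum (with equal weights 1/n) with respect to the endowed valuations v̄_i. Let (S_i)_{i∈A} be any partition of J among all agents of A, and let h_i ≥ 0 (i ∈ A) be reals with Σ_{i∈A} h_i ≤ n. Then ∏_{i ∈ A∖Ā} h_i · ∏_{i∈Ā} ( v_i(S_i) / max{ v_i(ℓ(i)), v_i(R_i) } + h_i ) ≤ (1+ε)^n · 4^n. -/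
open Finset

section Aux

variable {J : Type*} [DecidableEq J]

lemma aux_insert_le (v : Finset J → ℝ)
    (hmono : ∀ S T : Finset J, S ⊆ T → v S ≤ v T)
    (hsub : ∀ S T : Finset J, v (S ∩ T) + v (S ∪ T) ≤ v S + v T)
    (hv0 : v ∅ = 0) (S : Finset J) (j : J) :
    v (insert j S) ≤ v S + v {j} := by
  have h := hsub S {j}
  have h0 : (0:ℝ) ≤ v (S ∩ {j}) := hv0 ▸ hmono ∅ _ (empty_subset _)
  have hus : S ∪ {j} = insert j S := by ext a; simp [or_comm]
  rw [hus] at h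
  linarith

/-- sum of last-marginals is at most the total value -/
lemma aux_marg_sum (v : Finset J → ℝ)
    (hmono : ∀ S T : Finset J, S ⊆ T → v S ≤ v T)
    (hsub : ∀ S T : Finset J, v (S ∩ T) + v (S ∪ T) ≤ v S + v T)
    (hv0 : v ∅ = 0) (S : Finset J) :
    ∑ j ∈ S, (v S - v (S.erase j)) ≤ v S := by
  induction S using Finset.induction_on with
  | empty => simp [hv0]
  | @insert x T hx IH =>
    rw [Finset.sum_insert hx]
    have he : (insert x T).erase x = T := erase_insert hx
    have hstep : ∀ j ∈ T, v (insert x T) - v ((insert x T).erase j)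
        ≤ v T - v (T.erase j) := by
      intro j hj
      have hjx : j ≠ x := fun hh => hx (hh ▸ hj)
      have h1 : (insert x T).erase j = insert x (T.erase j) :=
        erase_insert_of_ne hjx.symm
      have h2 : insert x (T.erase j) ∩ T = T.erase j := by
        ext a
        simp only [mem_inter, mem_insert, mem_erase]
        constructor
        · rintro ⟨(rfl | ha), haT⟩
          · exact absurd haT hx
          · exact ha
        · intro ha; exact ⟨Or.inr ha, ha.2⟩
      have h3 : insert x (T.erase j) ∪ T = insert x T := by
        ext a
        simp only [mem_union, mem_insert, mem_erase]
        constructor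
        · rintro ((rfl | ha) | ha)
          · exact Or.inl rfl
          · exact Or.inr ha.2
          · exact Or.inr ha
        · rintro (rfl | ha)
          · exact Or.inl (Or.inl rfl)
          · by_cases haj : a = j
            · exact Or.inr (haj ▸ hj)
            · exact Or.inl (Or.inr ⟨haj, ha⟩)
      have := hsub (insert x (T.erase j)) T
      rw [h2, h3] at this
      rw [h1]
      linarith
    have hsum : ∑ j ∈ T, (v (insert x T) - v ((insert x T).erase j))
        ≤ ∑ j ∈ T, (v T - v (T.erase j)) := Finset.sum_le_sum hstep
    rw [he]
    linarith

/-- bounding value of a union by marginals at R -/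
lemma aux_union_le (v : Finset J → ℝ)
    (hmono : ∀ S T : Finset J, S ⊆ T → v S ≤ v T)
    (hsub : ∀ S T : Finset J, v (S ∩ T) + v (S ∪ T) ≤ v S + v T)
    (R : Finset J) (T : Finset J) (hdisj : Disjoint T R) :
    v (R ∪ T) ≤ v R + ∑ j ∈ T, (v (insert j R) - v R) := by
  induction T using Finset.induction_on with
  | empty => simp
  | @insert x T hx IH =>
    have hdx : x ∉ R := by
      have := Finset.disjoint_left.mp hdisj (mem_insert_self x T)
      exact this
    have hdT : Disjoint T R :=
      Finset.disjoint_of_subset_left (subset_insert x T) hdisj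
    have hxT : x ∉ R ∪ T := by
      simp only [mem_union]
      rintro (hc | hc); exacts [hdx hc, hx hc]
    have h2 : (R ∪ T) ∩ insert x R = R := by
      ext a
      simp only [mem_inter, mem_union, mem_insert]
      constructor
      · rintro ⟨(ha | ha), (rfl | ha')⟩
        · exact ha
        · exact ha
        · exact absurd (by simp [mem_union, ha] : a ∈ R ∪ T) (by simpa using hxT)
        · exact ha'
      · intro ha; exact ⟨Or.inl ha, Or.inr ha⟩
    have h3 : (R ∪ T) ∪ insert x R = insert x (R ∪ T) := by
      ext a
      simp only [mem_union, mem_insert]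
      tauto
    have hs := hsub (R ∪ T) (insert x R)
    rw [h2, h3] at hs
    have hins : R ∪ insert x T = insert x (R ∪ T) := by
      ext a; simp only [mem_union, mem_insert]; tauto
    have hIH := IH hdT
    rw [hins, Finset.sum_insert hx]
    linarith

end Aux

lemma aux_pow_sub_one_le (a : ℝ) (ha : 1 ≤ a) : ∀ k : ℕ, a ^ k - 1 ≤ k * (a - 1) * a ^ k := by
  intro k
  induction k with
  | zero => simp
  | succ k IH =>
    have h1 : (1:ℝ) ≤ a ^ k := one_le_pow₀ ha
    have h2 : a ^ (k+1) = a * a ^ k := by ring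
    have h6 : (1:ℝ) ≤ a ^ (k+1) := one_le_pow₀ ha
    have h7 := mul_le_mul_of_nonneg_left IH (le_trans zero_le_one ha)
    push_cast
    nlinarith [mul_nonneg (sub_nonneg.mpr ha) (sub_nonneg.mpr h6)]

lemma aux_ratio_pow (a : ℝ) (ha : 1 ≤ a) (n : ℕ) :
    ∀ m, n ≤ m → (m : ℝ) * (a ^ n - 1) ≤ (n : ℝ) * (a ^ m - 1) := by
  intro m hm
  induction m, hm using Nat.le_induction with
  | base => exact le_of_eq (by ring)
  | succ m hm IH =>
    have h1 : a ^ n - 1 ≤ n * (a - 1) * a ^ n := aux_pow_sub_one_le a ha n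
    have h2 : a ^ n ≤ a ^ m := pow_le_pow_right₀ ha hm
    have h3 : (0:ℝ) ≤ a - 1 := by linarith
    have h4 : a ^ (m+1) = a * a ^ m := by ring
    have h5 : (1:ℝ) ≤ a ^ m := one_le_pow₀ ha
    have h6 : a ^ n - 1 ≤ n * (a-1) * a ^ m := by
      calc a ^ n - 1 ≤ n * (a - 1) * a ^ n := h1
        _ ≤ n * (a-1) * a ^ m := by
            apply mul_le_mul_of_nonneg_left h2 (by positivity)
    have h7 : (n:ℝ) * (a ^ (m+1) - 1) = (n:ℝ)*(a ^ m - 1) + (n:ℝ)*(a-1)*a ^ m := by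
      rw [h4]; ring
    push_cast
    nlinarith

lemma aux_amgm {ι : Type*} (s : Finset ι) (n : ℕ) (hn : s.card = n) (hn0 : 0 < n)
    (z : ι → ℝ) (hz : ∀ i ∈ s, 0 ≤ z i) :
    ∏ i ∈ s, z i ≤ ((∑ i ∈ s, z i) / n) ^ n := by
  have hnR : (0:ℝ) < n := by exact_mod_cast hn0
  have hw : ∑ _i ∈ s, ((n:ℝ)⁻¹) = 1 := by
    rw [Finset.sum_const, hn, nsmul_eq_mul, mul_inv_cancel₀ (ne_of_gt hnR)]
  have key := Real.geom_mean_le_arith_mean_weighted s (fun _ => (n:ℝ)⁻¹) z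
      (fun i _ => by positivity) hw hz
  have h1 : ∏ i ∈ s, z i = (∏ i ∈ s, z i ^ ((n:ℝ)⁻¹)) ^ n := by
    rw [← Finset.prod_pow]
    refine Finset.prod_congr rfl fun i hi => ?_
    rw [← Real.rpow_natCast (z i ^ ((n:ℝ)⁻¹)) n, ← Real.rpow_mul (hz i hi),
      inv_mul_cancel₀ (ne_of_gt hnR), Real.rpow_one]
  have h2 : ∑ i ∈ s, ((n:ℝ)⁻¹) * z i = (∑ i ∈ s, z i) / n := by
    rw [← Finset.mul_sum]; ring
  rw [h1, ← h2]
  exact pow_le_pow_left₀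
    (Finset.prod_nonneg fun i hi => Real.rpow_nonneg (hz i hi) _) key n

lemma aux_subadd {J : Type*} [DecidableEq J] (v : Finset J → ℝ)
    (hmono : ∀ S T : Finset J, S ⊆ T → v S ≤ v T)
    (hsub : ∀ S T : Finset J, v (S ∩ T) + v (S ∪ T) ≤ v S + v T)
    (hv0 : v ∅ = 0) (S : Finset J) :
    v S ≤ ∑ j ∈ S, v {j} := by
  induction S using Finset.induction_on with
  | empty => simp [hv0]
  | @insert x T hx IH =>
    rw [Finset.sum_insert hx]
    have := aux_insert_le v hmono hsub hv0 T x
    linarith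

set_option maxHeartbeats 2000000 in
/-- (Ratio bound, symmetric case.)
Let `ε̄ ≥ 0`, `m ≥ n`, `|J| ≤ m`, `ε := (1+ε̄)^m − 1`, and let `R` be an `ε̄`-local
optimum (with equal weights `1/n`). For any partition `(S_i)_{i∈A}` of `J` and reals
`h_i ≥ 0` with `Σ h_i ≤ n`,
`∏_{i∈A∖Ā} h_i · ∏_{i∈Ā} (v_i(S_i)/max{v_i(ℓ(i)),v_i(R_i)} + h_i) ≤ (1+ε)^n · 4^n`. -/
theorem ratio_bound_symmetric {J A : Type*} [Fintype J] [DecidableEq J]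
    [Fintype A] [DecidableEq A] [Nonempty A]
    (n : ℕ) (hn : n = Fintype.card A)
    (v : A → Finset J → ℝ)
    (hmono : ∀ i, ∀ S T : Finset J, S ⊆ T → v i S ≤ v i T)
    (hsubmod : ∀ i, ∀ S T : Finset J, v i (S ∩ T) + v i (S ∪ T) ≤ v i S + v i T)
    (hv0 : ∀ i, v i ∅ = 0)
    (Abar : Finset A) (hAbar : Abar = univ.filter (fun i => 0 < v i (univ : Finset J)))
    (hAbarne : Abar.Nonempty)
    (ℓ : A → J) (hℓ : ∀ i ∈ Abar, ∀ j : J, v i {j} ≤ v i {ℓ i})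
    (vb : A → Finset J → ℝ) (hvb : ∀ i S, vb i S = v i {ℓ i} + v i S)
    (ε' : ℝ) (hε' : 0 ≤ ε') (m : ℕ) (hmn : n ≤ m) (hJm : Fintype.card J ≤ m)
    (ε : ℝ) (hε : ε = (1 + ε') ^ m - 1)
    (R : A → Finset J)
    (hRout : ∀ i ∉ Abar, R i = ∅)
    (hRdisj : ∀ i k, i ≠ k → Disjoint (R i) (R k))
    (hRcover : Abar.biUnion R = (univ : Finset J))
    (hloc : ∀ i ∈ Abar, ∀ k ∈ Abar, i ≠ k → ∀ j ∈ R i,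
      (vb i ((R i).erase j) / vb i (R i)) *
        (vb k (R k ∪ {j}) / vb k (R k)) ≤ (1 + ε') ^ n)
    (S : A → Finset J)
    (hSdisj : ∀ i k, i ≠ k → Disjoint (S i) (S k))
    (hScover : Finset.univ.biUnion S = (univ : Finset J))
    (h : A → ℝ) (hh : ∀ i, 0 ≤ h i) (hhsum : ∑ i, h i ≤ (n : ℝ)) :
    (∏ i ∈ univ \ Abar, h i) *
      ∏ i ∈ Abar, (v i (S i) / max (v i {ℓ i}) (v i (R i)) + h i)
        ≤ (1 + ε) ^ n * 4 ^ n := by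
  classical
  obtain ⟨M, hM⟩ : ∃ M : A → ℝ, ∀ i, M i = max (v i {ℓ i}) (v i (R i)) :=
    ⟨_, fun _ => rfl⟩
  simp only [← hM]
  set a : ℝ := 1 + ε' with ha_def
  have ha : 1 ≤ a := by rw [ha_def]; linarith
  have ha0 : 0 < a := lt_of_lt_of_le one_pos ha
  set q : ℝ := a ^ n with hq_def
  have hq1 : 1 ≤ q := one_le_pow₀ ha
  have hn0 : 0 < n := by rw [hn]; exact Fintype.card_pos
  have hnR : (0:ℝ) < n := by exact_mod_cast hn0
  have ham : 1 ≤ a ^ m := one_le_pow₀ ha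
  have heps : 1 + ε = a ^ m := by rw [hε]; ring
  have hvnonneg : ∀ i (T : Finset J), 0 ≤ v i T := fun i T =>
    (hv0 i) ▸ hmono i ∅ T (empty_subset _)
  -- positivity of the largest singleton on Abar
  have hℓpos : ∀ i ∈ Abar, 0 < v i {ℓ i} := by
    intro i hi
    have hiu : 0 < v i (univ : Finset J) := by
      rw [hAbar] at hi; exact (mem_filter.mp hi).2
    by_contra hle
    push_neg at hle
    have h1 : v i (univ : Finset J) ≤ ∑ j : J, v i {j} :=
      aux_subadd (v i) (hmono i) (hsubmod i) (hv0 i) univ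
    have h2 : ∑ j : J, v i {j} ≤ 0 := by
      apply Finset.sum_nonpos
      intro j _
      exact le_trans (hℓ i hi j) hle
    linarith
  have hMpos : ∀ i ∈ Abar, 0 < M i := by
    intro i hi; rw [hM]; exact lt_max_of_lt_left (hℓpos i hi)
  have hvbpos : ∀ i ∈ Abar, ∀ T : Finset J, 0 < vb i T := by
    intro i hi T; rw [hvb]
    have := hvnonneg i T
    linarith [hℓpos i hi]
  -- the owner of each item
  have howner : ∀ j : J, ∃ i, i ∈ Abar ∧ j ∈ R i := by
    intro j
    have : j ∈ Abar.biUnion R := by rw [hRcover]; exact mem_univ j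
    simpa [mem_biUnion] using this
  choose o ho1 ho2 using howner
  -- prices
  set p : J → ℝ := fun j => vb (o j) (R (o j)) / vb (o j) ((R (o j)).erase j) - 1
    with hp_def
  have howner_eq : ∀ i ∈ Abar, ∀ j ∈ R i, o j = i := by
    intro i hi j hj
    by_contra hne
    exact (Finset.disjoint_left.mp (hRdisj _ _ hne) (ho2 j)) hj
  have hp_nonneg : ∀ j, 0 ≤ p j := by
    intro j
    have hpos := hvbpos (o j) (ho1 j) ((R (o j)).erase j)
    have hmono' : vb (o j) ((R (o j)).erase j) ≤ vb (o j) (R (o j)) := by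
      rw [hvb, hvb]
      have := hmono (o j) _ _ (erase_subset j (R (o j)))
      linarith
    have h1 : 1 ≤ vb (o j) (R (o j)) / vb (o j) ((R (o j)).erase j) :=
      (one_le_div hpos).mpr hmono'
    simp only [hp_def]
    linarith
  -- the denominator in the price is at least M i
  have herase_ge : ∀ i ∈ Abar, ∀ j ∈ R i, M i ≤ vb i ((R i).erase j) := by
    intro i hi j hj
    rw [hvb, hM]
    apply max_le
    · linarith [hvnonneg i ((R i).erase j)]
    · have h1 : v i (insert j ((R i).erase j)) ≤ v i ((R i).erase j) + v i {j} :=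
        aux_insert_le (v i) (hmono i) (hsubmod i) (hv0 i) _ j
      rw [insert_erase hj] at h1
      have h2 := hℓ i hi j
      linarith
  -- per-agent price sums
  have hpricesum : ∀ i ∈ Abar, ∑ j ∈ R i, p j ≤ 1 := by
    intro i hi
    have hMi := hMpos i hi
    have hstep : ∀ j ∈ R i, p j ≤ (v i (R i) - v i ((R i).erase j)) / M i := by
      intro j hj
      have hoj := howner_eq i hi j hj
      have hE := hvbpos i hi ((R i).erase j)
      have hge := herase_ge i hi j hj
      have hnum : 0 ≤ v i (R i) - v i ((R i).erase j) := by
        have := hmono i _ _ (erase_subset j (R i)); linarith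
      have hp_eq : p j = (v i (R i) - v i ((R i).erase j)) / vb i ((R i).erase j) := by
        simp only [hp_def, hoj]
        rw [div_sub_one (ne_of_gt hE), hvb i (R i), hvb i ((R i).erase j)]
        ring_nf
      rw [hp_eq]
      gcongr
    calc ∑ j ∈ R i, p j ≤ ∑ j ∈ R i, (v i (R i) - v i ((R i).erase j)) / M i :=
          Finset.sum_le_sum hstep
      _ = (∑ j ∈ R i, (v i (R i) - v i ((R i).erase j))) / M i := by
          rw [Finset.sum_div]
      _ ≤ v i (R i) / M i := by
          gcongr
          exact aux_marg_sum (v i) (hmono i) (hsubmod i) (hv0 i) (R i)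
      _ ≤ 1 := by
          rw [div_le_one hMi, hM]; exact le_max_right _ _
  -- total price sum
  have htot : ∑ j : J, p j ≤ (n : ℝ) := by
    have hdisjoint : (Abar : Set A).PairwiseDisjoint R := fun x _ y _ hxy =>
      hRdisj x y hxy
    have hsplit : ∑ j ∈ Abar.biUnion R, p j = ∑ i ∈ Abar, ∑ j ∈ R i, p j :=
      Finset.sum_biUnion hdisjoint
    rw [hRcover] at hsplit
    calc ∑ j : J, p j = ∑ i ∈ Abar, ∑ j ∈ R i, p j := hsplit
      _ ≤ ∑ _i ∈ Abar, (1:ℝ) := Finset.sum_le_sum hpricesum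
      _ = (Abar.card : ℝ) := by simp
      _ ≤ (n:ℝ) := by
          rw [hn]
          exact_mod_cast Finset.card_le_card (subset_univ Abar)
  have hfnn : ∀ j : J, 0 ≤ 2*(q-1) + 2*q*p j := by
    intro j
    have := hp_nonneg j
    nlinarith
  -- pointwise bound for agents in Abar
  have hkey : ∀ k ∈ Abar, v k (S k) / M k ≤ 1 + ∑ j ∈ S k, (2*(q-1) + 2*q*p j) := by
    intro k hk
    have hMk := hMpos k hk
    have hDk := hvbpos k hk (R k)
    have hDkM : vb k (R k) ≤ 2 * M k := by
      rw [hvb, hM]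
      have := le_max_left (v k {ℓ k}) (v k (R k))
      have := le_max_right (v k {ℓ k}) (v k (R k))
      linarith
    have hsub1 : v k (S k) ≤ v k (R k ∪ (S k \ R k)) := by
      apply hmono
      intro x hx
      simp only [mem_union, mem_sdiff]
      by_cases hxR : x ∈ R k
      · exact Or.inl hxR
      · exact Or.inr ⟨hx, hxR⟩
    have hsub2 := aux_union_le (v k) (hmono k) (hsubmod k) (R k) (S k \ R k)
      sdiff_disjoint
    have hstep3 : ∀ j ∈ S k \ R k,
        v k (insert j (R k)) - v k (R k) ≤ M k * (2*(q-1) + 2*q*p j) := by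
      intro j hj
      obtain ⟨hjS, hjR⟩ := mem_sdiff.mp hj
      have hi : o j ∈ Abar := ho1 j
      have hji : j ∈ R (o j) := ho2 j
      have hik : o j ≠ k := by
        intro hc; rw [hc] at hji; exact hjR hji
      have hl := hloc (o j) hi k hk hik j hji
      have hX := hvbpos (o j) hi ((R (o j)).erase j)
      have hDi := hvbpos (o j) hi (R (o j))
      have hXY : vb (o j) ((R (o j)).erase j) * vb k (R k ∪ {j})
          ≤ q * (vb (o j) (R (o j)) * vb k (R k)) := by
        rw [div_mul_div_comm] at hl
        have := (div_le_iff₀ (by positivity)).mp hl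
        linarith
      have h1pj : 1 + p j = vb (o j) (R (o j)) / vb (o j) ((R (o j)).erase j) := by
        simp only [hp_def]; ring
      have hY2 : vb k (R k ∪ {j}) ≤ q * (1 + p j) * vb k (R k) := by
        rw [h1pj]
        have hle : vb k (R k ∪ {j}) * vb (o j) ((R (o j)).erase j)
            ≤ q * (vb (o j) (R (o j)) * vb k (R k)) := by linarith [hXY]
        have := (le_div_iff₀ hX).mpr hle
        calc vb k (R k ∪ {j})
            ≤ q * (vb (o j) (R (o j)) * vb k (R k)) / vb (o j) ((R (o j)).erase j) :=
              this
          _ = q * (vb (o j) (R (o j)) / vb (o j) ((R (o j)).erase j)) * vb k (R k) := by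
              ring
      have hunion : R k ∪ {j} = insert j (R k) := by
        ext x; simp [or_comm]
      rw [hunion] at hY2
      rw [hvb k (insert j (R k)), hvb k (R k)] at hY2
      have hfac : 0 ≤ q * (1 + p j) - 1 := by nlinarith [hp_nonneg j]
      have hvbRk : v k {ℓ k} + v k (R k) ≤ 2 * M k := by
        rw [hvb] at hDkM; linarith
      have hmul := mul_le_mul_of_nonneg_left hvbRk hfac
      have hexp : M k * (2*(q-1) + 2*q*p j) = (q * (1 + p j) - 1) * (2 * M k) := by
        ring
      rw [hexp]
      nlinarith [hY2, hmul]
    have hsum3 : v k (S k) ≤ v k (R k) + ∑ j ∈ S k \ R k, M k * (2*(q-1) + 2*q*p j) := by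
      have := Finset.sum_le_sum hstep3
      linarith
    have hsum4 : ∑ j ∈ S k \ R k, M k * (2*(q-1)+2*q*p j)
        ≤ ∑ j ∈ S k, M k * (2*(q-1)+2*q*p j) := by
      apply Finset.sum_le_sum_of_subset_of_nonneg sdiff_subset
      intro j _ _
      exact mul_nonneg (le_of_lt hMk) (hfnn j)
    rw [div_le_iff₀ hMk]
    have hms : ∑ j ∈ S k, M k * (2*(q-1)+2*q*p j)
        = M k * ∑ j ∈ S k, (2*(q-1)+2*q*p j) := by
      rw [Finset.mul_sum]
    have hvRk : v k (R k) ≤ M k := by rw [hM]; exact le_max_right _ _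
    have : v k (S k) ≤ M k + M k * ∑ j ∈ S k, (2*(q-1)+2*q*p j) := by
      rw [← hms]; linarith
    linarith [this]
  -- the combined factor function
  set z : A → ℝ := fun i => if i ∈ Abar then v i (S i) / M i + h i else h i
    with hz_def
  have hznn : ∀ i ∈ (univ : Finset A), 0 ≤ z i := by
    intro i _
    by_cases hi : i ∈ Abar
    · simp only [hz_def, if_pos hi]
      exact add_nonneg (div_nonneg (hvnonneg i _) (le_of_lt (hMpos i hi))) (hh i)
    · simp only [hz_def, if_neg hi]; exact hh i
  have hprod : (∏ i ∈ univ \ Abar, h i) * ∏ i ∈ Abar, (v i (S i) / M i + h i)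
      = ∏ i ∈ (univ : Finset A), z i := by
    rw [← Finset.prod_sdiff (subset_univ Abar)]
    congr 1
    · apply Finset.prod_congr rfl
      intro i hi
      simp only [hz_def, if_neg (mem_sdiff.mp hi).2]
    · apply Finset.prod_congr rfl
      intro i hi
      simp only [hz_def, if_pos hi]
  -- bounding the sum of all factors
  have hbiU : ∑ i ∈ Abar, ∑ j ∈ S i, (2*(q-1) + 2*q*p j)
      ≤ ∑ j : J, (2*(q-1) + 2*q*p j) := by
    have hdisjS : (Abar : Set A).PairwiseDisjoint S := fun x _ y _ hxy =>
      hSdisj x y hxy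
    rw [← Finset.sum_biUnion hdisjS]
    apply Finset.sum_le_sum_of_subset_of_nonneg (subset_univ _)
    intro j _ _
    exact hfnn j
  have hJcard : ((Fintype.card J : ℝ)) ≤ (m : ℝ) := by exact_mod_cast hJm
  have hallJ : ∑ j : J, (2*(q-1) + 2*q*p j) ≤ 2*(q-1)*m + 2*q*n := by
    rw [Finset.sum_add_distrib]
    have h1 : ∑ _j : J, (2*(q-1)) = (Fintype.card J : ℝ) * (2*(q-1)) := by
      rw [Finset.sum_const, Finset.card_univ, nsmul_eq_mul]
    have h2 : ∑ j : J, 2*q*p j = 2*q * ∑ j : J, p j := by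
      rw [Finset.mul_sum]
    rw [h1, h2]
    have h3 : (Fintype.card J : ℝ) * (2*(q-1)) ≤ (m:ℝ) * (2*(q-1)) := by
      apply mul_le_mul_of_nonneg_right hJcard
      linarith
    have h4 : 2*q * ∑ j : J, p j ≤ 2*q*n := by
      apply mul_le_mul_of_nonneg_left htot
      linarith
    linarith
  have hcardAbar : (Abar.card : ℝ) ≤ (n : ℝ) := by
    rw [hn]; exact_mod_cast Finset.card_le_card (subset_univ Abar)
  have hzsum : ∑ i : A, z i ≤ 4 * n * (1 + ε) := by
    have hsplit : ∑ i : A, z i = (∑ i ∈ univ \ Abar, z i) + ∑ i ∈ Abar, z i :=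
      (Finset.sum_sdiff (subset_univ Abar)).symm
    have hout : ∑ i ∈ univ \ Abar, z i = ∑ i ∈ univ \ Abar, h i := by
      apply Finset.sum_congr rfl
      intro i hi
      simp only [hz_def, if_neg (mem_sdiff.mp hi).2]
    have hin : ∑ i ∈ Abar, z i ≤ ∑ i ∈ Abar, (h i + (1 + ∑ j ∈ S i, (2*(q-1) + 2*q*p j))) := by
      apply Finset.sum_le_sum
      intro i hi
      simp only [hz_def, if_pos hi]
      have := hkey i hi
      linarith
    have hhsplit : (∑ i ∈ univ \ Abar, h i) + ∑ i ∈ Abar, h i = ∑ i : A, h i :=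
      Finset.sum_sdiff (subset_univ Abar)
    have hAsum : ∑ i ∈ Abar, (h i + (1 + ∑ j ∈ S i, (2*(q-1) + 2*q*p j)))
        = (∑ i ∈ Abar, h i) + (Abar.card : ℝ) + ∑ i ∈ Abar, ∑ j ∈ S i, (2*(q-1) + 2*q*p j) := by
      rw [Finset.sum_add_distrib, Finset.sum_add_distrib, Finset.sum_const,
        nsmul_eq_mul, mul_one]
      ring
    have hratio := aux_ratio_pow a ha n m hmn
    have hpow : a ^ n ≤ a ^ m := pow_le_pow_right₀ ha hmn
    have hpow2 : (n:ℝ) * a ^ n ≤ (n:ℝ) * a ^ m :=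
      mul_le_mul_of_nonneg_left hpow (le_of_lt hnR)
    have hfin : (n:ℝ) + (n:ℝ) + (2*(q-1)*m + 2*q*n) ≤ 4 * n * (1 + ε) := by
      rw [heps, hq_def]
      linarith [hratio, hpow2]
    calc ∑ i : A, z i
        = (∑ i ∈ univ \ Abar, h i) + ∑ i ∈ Abar, z i := by rw [hsplit, hout]
      _ ≤ (∑ i ∈ univ \ Abar, h i) + ((∑ i ∈ Abar, h i) + (Abar.card : ℝ)
            + ∑ i ∈ Abar, ∑ j ∈ S i, (2*(q-1) + 2*q*p j)) := by
          rw [← hAsum]; linarith [hin]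
      _ ≤ (n:ℝ) + (n:ℝ) + (2*(q-1)*m + 2*q*n) := by
          have := le_trans hbiU hallJ
          linarith [hhsplit ▸ hhsum, hcardAbar, this]
      _ ≤ 4 * n * (1 + ε) := hfin
  -- AM-GM
  have hcardA : (univ : Finset A).card = n := by rw [hn, Finset.card_univ]
  have hamgm := aux_amgm (univ : Finset A) n hcardA hn0 z hznn
  rw [hprod]
  refine le_trans hamgm ?_
  have h4 : (∑ i : A, z i) / n ≤ 4 * (1+ε) := by
    rw [div_le_iff₀ hnR]
    linarith [hzsum]
  have hbase : 0 ≤ (∑ i : A, z i) / n :=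
    div_nonneg (Finset.sum_nonneg hznn) (le_of_lt hnR)
  calc ((∑ i : A, z i) / n) ^ n ≤ (4 * (1+ε)) ^ n := pow_le_pow_left₀ hbase h4 n
    _ = (1+ε)^n * 4^n := by rw [mul_pow]; ring
end
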